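/- arXiv:math/0211124 — 6 statements merged into one kernel-verified Lean document; each statement's English description precedes it below -/
import Mathlib

section
/- Let n ≥ 2 be an integer, let x, y ∈ ℝ^n, and let r > 0. Then there is a constant C > 0 (depending on n, x, y, r) such that the kernel K(z) = |x−z|^{-(n-1)} 𝟙_{{|z−x| ≥ r}}(z) − |y−z|^{-(n-1)} 𝟙_{{|z−y| ≥ r}}(z) satisfies |K(z)| ≤ C (1 + |z|)^{-n} for all z ∈ ℝ^n. -/
open MeasureTheory Metric

lemma aux_sub_rpow {p a b : ℝ} (hp : 1 ≤ p) (ha : 0 < a) (hab : a ≤ b) :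
    a ^ (-p) - b ^ (-p) ≤ p * (b - a) * a ^ (-(p + 1)) := by
  have hb : 0 < b := ha.trans_le hab
  have hs : (-1 : ℝ) ≤ a / b - 1 := by
    have : 0 ≤ a / b := by positivity
    linarith
  have hber := one_add_mul_self_le_rpow_one_add hs hp
  rw [add_sub_cancel] at hber
  have hdiv : (a / b) ^ p = a ^ p / b ^ p := Real.div_rpow ha.le hb.le p
  have key : 1 - a ^ p / b ^ p ≤ p * (b - a) / b := by
    rw [← hdiv]
    have h : p * (b - a) / b = p * (1 - a / b) := by field_simp
    rw [h]; nlinarith [hber]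
  have h1 : a ^ (-p) - b ^ (-p) = a ^ (-p) * (1 - a ^ p / b ^ p) := by
    have hap : (0:ℝ) < a ^ p := Real.rpow_pos_of_pos ha p
    have hbp : (0:ℝ) < b ^ p := Real.rpow_pos_of_pos hb p
    rw [Real.rpow_neg ha.le, Real.rpow_neg hb.le]
    field_simp
  rw [h1]
  have h2 : a ^ (-p) * (1 - a ^ p / b ^ p) ≤ a ^ (-p) * (p * (b - a) / b) :=
    mul_le_mul_of_nonneg_left key (Real.rpow_nonneg ha.le _)
  refine h2.trans ?_
  have h3 : p * (b - a) / b ≤ p * (b - a) / a :=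
    div_le_div_of_nonneg_left (by nlinarith) ha hab
  have h4 : a ^ (-(p+1)) = a ^ (-p) / a := by
    rw [show -(p+1) = -p + (-1) by ring, Real.rpow_add ha, Real.rpow_neg_one]
    ring
  rw [h4]
  calc a ^ (-p) * (p * (b - a) / b) ≤ a ^ (-p) * (p * (b - a) / a) :=
        mul_le_mul_of_nonneg_left h3 (Real.rpow_nonneg ha.le _)
    _ = p * (b - a) * (a ^ (-p) / a) := by ring

/-- For n ≥ 2, x, y ∈ ℝ^n and r > 0, there is C > 0 (depending on n, x, y, r)
such that the kernel
K(z) = |x−z|^{-(n-1)} 𝟙_{|z−x|≥r}(z) − |y−z|^{-(n-1)} 𝟙_{|z−y|≥r}(z)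
satisfies |K(z)| ≤ C (1+|z|)^{-n} for all z. -/
theorem stmt_6 (n : ℕ) (hn : 2 ≤ n) (x y : EuclideanSpace ℝ (Fin n)) (r : ℝ) (hr : 0 < r) :
    ∃ C > 0, ∀ z : EuclideanSpace ℝ (Fin n),
      |(if r ≤ dist z x then dist x z ^ (-((n : ℝ) - 1)) else 0) -
        (if r ≤ dist z y then dist y z ^ (-((n : ℝ) - 1)) else 0)|
        ≤ C * (1 + ‖z‖) ^ (-(n : ℝ)) := by
  set p : ℝ := (n : ℝ) - 1 with hpdef
  have hp1 : 1 ≤ p := by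
    have : (2:ℝ) ≤ (n:ℝ) := by exact_mod_cast hn
    simp [hpdef]; linarith
  set R : ℝ := 2 * (‖x‖ + ‖y‖ + r + 1) with hRdef
  have hR1 : 2 ≤ R := by
    have hx0 : 0 ≤ ‖x‖ := norm_nonneg x
    have hy0 : 0 ≤ ‖y‖ := norm_nonneg y
    simp only [hRdef]; nlinarith
  refine ⟨2 * r ^ (-p) * (1 + R) ^ (n:ℝ) + p * (dist x y + 1) * 4 ^ (n:ℝ), by positivity, ?_⟩
  intro z
  -- each term is between 0 and r ^ (-p)
  have hterm : ∀ w : EuclideanSpace ℝ (Fin n),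
      0 ≤ (if r ≤ dist z w then dist w z ^ (-p) else 0) ∧
      (if r ≤ dist z w then dist w z ^ (-p) else 0) ≤ r ^ (-p) := by
    intro w
    by_cases h : r ≤ dist z w
    · rw [if_pos h]
      rw [dist_comm z w] at h
      constructor
      · exact Real.rpow_nonneg dist_nonneg _
      · exact Real.rpow_le_rpow_of_nonpos hr h (by linarith)
    · rw [if_neg h]
      exact ⟨le_refl 0, Real.rpow_nonneg hr.le _⟩
  have hz1 : (0:ℝ) < 1 + ‖z‖ := by positivity
  have hzn : 0 < (1 + ‖z‖) ^ (-(n:ℝ)) := Real.rpow_pos_of_pos hz1 _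
  by_cases hz : ‖z‖ ≤ R
  · -- small z: crude bound
    have habs : |(if r ≤ dist z x then dist x z ^ (-p) else 0) -
        (if r ≤ dist z y then dist y z ^ (-p) else 0)| ≤ 2 * r ^ (-p) := by
      rw [abs_sub_le_iff]
      constructor <;> nlinarith [(hterm x).1, (hterm x).2, (hterm y).1, (hterm y).2]
    refine habs.trans ?_
    have hmono : (1 + R) ^ (-(n:ℝ)) ≤ (1 + ‖z‖) ^ (-(n:ℝ)) :=
      Real.rpow_le_rpow_of_nonpos hz1 (by linarith) (neg_nonpos.mpr (Nat.cast_nonneg n))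
    have hcancel : (1 + R) ^ ((n:ℝ)) * (1 + R) ^ (-(n:ℝ)) = 1 := by
      rw [← Real.rpow_add (by linarith), add_neg_cancel, Real.rpow_zero]
    have hrp : 0 ≤ r ^ (-p) := Real.rpow_nonneg hr.le _
    have hpos : 0 ≤ 2 * r ^ (-p) * (1 + R) ^ ((n:ℝ)) := by positivity
    have hextra : 0 ≤ p * (dist x y + 1) * 4 ^ ((n:ℝ)) := by
      have h4n : (0:ℝ) ≤ 4 ^ ((n:ℝ)) := Real.rpow_nonneg (by norm_num) _
      have hdn := dist_nonneg (x := x) (y := y)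
      exact mul_nonneg (mul_nonneg (by linarith) (by linarith)) h4n
    calc 2 * r ^ (-p)
        = 2 * r ^ (-p) * (1 + R) ^ ((n:ℝ)) * (1 + R) ^ (-(n:ℝ)) := by
          rw [mul_assoc, hcancel, mul_one]
      _ ≤ 2 * r ^ (-p) * (1 + R) ^ ((n:ℝ)) * (1 + ‖z‖) ^ (-(n:ℝ)) :=
          mul_le_mul_of_nonneg_left hmono hpos
      _ ≤ (2 * r ^ (-p) * (1 + R) ^ ((n:ℝ)) + p * (dist x y + 1) * 4 ^ ((n:ℝ))) *
            (1 + ‖z‖) ^ (-(n:ℝ)) :=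
          mul_le_mul_of_nonneg_right (by linarith) hzn.le
  · -- large z
    push_neg at hz
    have hx0 : 0 ≤ ‖x‖ := norm_nonneg x
    have hy0 : 0 ≤ ‖y‖ := norm_nonneg y
    have hhalf : ‖z‖ / 2 ≤ dist z x ∧ ‖z‖ / 2 ≤ dist z y := by
      constructor
      · have := norm_sub_norm_le z x
        rw [← dist_eq_norm] at this
        simp only [hRdef] at hz; linarith
      · have := norm_sub_norm_le z y
        rw [← dist_eq_norm] at this
        simp only [hRdef] at hz; linarith
    have hrhalf : r ≤ ‖z‖ / 2 := by simp only [hRdef] at hz; linarith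
    have hix : r ≤ dist z x := hrhalf.trans hhalf.1
    have hiy : r ≤ dist z y := hrhalf.trans hhalf.2
    rw [if_pos hix, if_pos hiy]
    have hax : ‖z‖ / 2 ≤ dist x z := by rw [dist_comm]; exact hhalf.1
    have hay : ‖z‖ / 2 ≤ dist y z := by rw [dist_comm]; exact hhalf.2
    have hzpos : 0 < ‖z‖ / 2 := by linarith
    have hdist : |dist x z - dist y z| ≤ dist x y := abs_dist_sub_le x y z
    -- main estimate
    have hmain : |dist x z ^ (-p) - dist y z ^ (-p)| ≤
        p * dist x y * (‖z‖ / 2) ^ (-(p+1)) := by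
      have hmono2 : ∀ a : ℝ, ‖z‖ / 2 ≤ a → a ^ (-(p+1)) ≤ (‖z‖/2) ^ (-(p+1)) :=
        fun a ha => Real.rpow_le_rpow_of_nonpos hzpos ha (by linarith)
      have hzp : 0 ≤ (‖z‖/2) ^ (-(p+1)) := Real.rpow_nonneg hzpos.le _
      rcases le_total (dist x z) (dist y z) with hab | hab
      · rw [abs_of_nonneg (by
          have := Real.rpow_le_rpow_of_nonpos (hzpos.trans_le hax) hab (by linarith : -p ≤ 0)
          linarith)]
        have h0 := aux_sub_rpow hp1 (hzpos.trans_le hax) hab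
        have hd : dist y z - dist x z ≤ dist x y := by
          rw [abs_sub_le_iff] at hdist; linarith [hdist.2]
        have h5 := hmono2 _ hax
        have hA : 0 ≤ dist x z ^ (-(p+1)) := Real.rpow_nonneg (hzpos.trans_le hax).le _
        have hpd : 0 ≤ p * dist x y := mul_nonneg (by linarith) dist_nonneg
        calc dist x z ^ (-p) - dist y z ^ (-p)
            ≤ p * (dist y z - dist x z) * dist x z ^ (-(p+1)) := h0
          _ ≤ p * dist x y * dist x z ^ (-(p+1)) :=
              mul_le_mul_of_nonneg_right
                (mul_le_mul_of_nonneg_left hd (by linarith)) hA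
          _ ≤ p * dist x y * (‖z‖/2) ^ (-(p+1)) :=
              mul_le_mul_of_nonneg_left h5 hpd
      · rw [abs_sub_comm, abs_of_nonneg (by
          have := Real.rpow_le_rpow_of_nonpos (hzpos.trans_le hay) hab (by linarith : -p ≤ 0)
          linarith)]
        have h0 := aux_sub_rpow hp1 (hzpos.trans_le hay) hab
        have hd : dist x z - dist y z ≤ dist x y := by
          rw [abs_sub_le_iff] at hdist; linarith [hdist.1]
        have h5 := hmono2 _ hay
        have hA : 0 ≤ dist y z ^ (-(p+1)) := Real.rpow_nonneg (hzpos.trans_le hay).le _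
        have hpd : 0 ≤ p * dist x y := mul_nonneg (by linarith) dist_nonneg
        calc dist y z ^ (-p) - dist x z ^ (-p)
            ≤ p * (dist x z - dist y z) * dist y z ^ (-(p+1)) := h0
          _ ≤ p * dist x y * dist y z ^ (-(p+1)) :=
              mul_le_mul_of_nonneg_right
                (mul_le_mul_of_nonneg_left hd (by linarith)) hA
          _ ≤ p * dist x y * (‖z‖/2) ^ (-(p+1)) :=
              mul_le_mul_of_nonneg_left h5 hpd
    have hpn : p + 1 = (n:ℝ) := by simp [hpdef]
    rw [hpn] at hmain
    refine hmain.trans ?_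
    -- (‖z‖/2)^{-n} ≤ 4^n (1+‖z‖)^{-n}
    have hz2 : (1 + ‖z‖) / 4 ≤ ‖z‖ / 2 := by linarith
    have hq : (0:ℝ) < (1 + ‖z‖) / 4 := by positivity
    have step1 : (‖z‖/2) ^ (-(n:ℝ)) ≤ ((1 + ‖z‖)/4) ^ (-(n:ℝ)) :=
      Real.rpow_le_rpow_of_nonpos hq hz2 (neg_nonpos.mpr (Nat.cast_nonneg n))
    have step2 : ((1 + ‖z‖)/4) ^ (-(n:ℝ)) = 4 ^ ((n:ℝ)) * (1 + ‖z‖) ^ (-(n:ℝ)) := by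
      rw [Real.div_rpow hz1.le (by norm_num), Real.rpow_neg hz1.le, Real.rpow_neg (by norm_num : (0:ℝ) ≤ 4)]
      field_simp
    rw [step2] at step1
    have hpd : 0 ≤ p * dist x y := mul_nonneg (by linarith) dist_nonneg
    have hle : p * dist x y * (‖z‖/2) ^ (-(n:ℝ)) ≤
        p * dist x y * (4 ^ ((n:ℝ)) * (1 + ‖z‖) ^ (-(n:ℝ))) :=
      mul_le_mul_of_nonneg_left step1 hpd
    refine hle.trans ?_
    have h6 : 0 ≤ 2 * r ^ (-p) * (1 + R) ^ ((n:ℝ)) := by positivity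
    have h4n : (0:ℝ) ≤ 4 ^ ((n:ℝ)) := Real.rpow_nonneg (by norm_num) _
    have h7 : p * dist x y * 4 ^ ((n:ℝ)) ≤ p * (dist x y + 1) * 4 ^ ((n:ℝ)) := by
      have hp0 : (0:ℝ) ≤ p := by linarith
      nlinarith
    have h8 : p * dist x y * (4 ^ ((n:ℝ)) * (1 + ‖z‖) ^ (-(n:ℝ))) =
        p * dist x y * 4 ^ ((n:ℝ)) * (1 + ‖z‖) ^ (-(n:ℝ)) := by ring
    rw [h8]
    exact mul_le_mul_of_nonneg_right (by linarith) hzn.le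
end

section
/- Let n ≥ 2 be an integer and let 1 ≤ q < ∞. For every f ∈ L^q(ℝ^n), every x, y ∈ ℝ^n, and every r > 0, the integral ∫_{ℝ^n} |K(z)| |f(z)| dz is finite, where K(z) = |x−z|^{-(n-1)} 𝟙_{{|z−x| ≥ r}}(z) − |y−z|^{-(n-1)} 𝟙_{{|z−y| ≥ r}}(z). In particular the integral formally defining the difference J_r(f)(x) − J_r(f)(y) converges absolutely. -/
open MeasureTheory Metric
open scoped ENNReal

/-!
Both truncated kernels are bounded by `r^{-(n-1)}`, and far from `x` they differ by
`O(|z - x|^{-n})` by the mean value theorem for `t ↦ t^{-(n-1)}`. Hence the kernel difference is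
dominated by `C (1 + |z - x|)^{-n}`, which lies in `L^p` for every `p ∈ (1, ∞]`; Hölder's
inequality with the exponent conjugate to `q ∈ [1, ∞)` then makes `K f` integrable.
-/

lemma abs_rpow_neg_sub_rpow_neg_le {s u a b : ℝ} (hs : 0 < s) (hu : 0 < u)
    (ha : u ≤ a) (hb : u ≤ b) :
    |a ^ (-s) - b ^ (-s)| ≤ s * u ^ (-(s + 1)) * |a - b| := by
  have hderiv : ∀ t ∈ Set.Ici u, HasDerivWithinAt (fun w : ℝ => w ^ (-s))
      (-s * t ^ (-s - 1)) (Set.Ici u) t := fun t ht =>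
    (Real.hasDerivAt_rpow_const (.inl (hu.trans_le ht).ne')).hasDerivWithinAt
  have hbound : ∀ t ∈ Set.Ici u, ‖-s * t ^ (-s - 1)‖ ≤ s * u ^ (-(s + 1)) := by
    intro t ht
    have ht₀ : 0 < t := hu.trans_le ht
    rw [norm_mul, norm_neg, Real.norm_of_nonneg hs.le, Real.norm_of_nonneg (by positivity),
      neg_add']
    exact mul_le_mul_of_nonneg_left (Real.rpow_le_rpow_of_nonpos hu ht (by linarith)) hs.le
  simpa [Real.norm_eq_abs] using
    (convex_Ici u).norm_image_sub_le_of_norm_hasDerivWithin_le hderiv hbound hb ha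

lemma exists_abs_le_mul_one_add_dist_rpow_neg {α : Type*} [PseudoMetricSpace α]
    {g : α → ℝ} {x : α} {t B A R : ℝ} (ht : 0 ≤ t) (hB : ∀ z, |g z| ≤ B)
    (hA : ∀ z, R ≤ dist z x → |g z| ≤ A * dist z x ^ (-t)) :
    ∃ C, ∀ z, |g z| ≤ C * (1 + dist z x) ^ (-t) := by
  set M := max R 1
  refine ⟨B * (1 + M) ^ t + max A 0 * 2 ^ t, fun z => ?_⟩
  have hpos : 0 < (1 + dist z x) ^ (-t) := by positivity
  have hB₀ : 0 ≤ B := (abs_nonneg _).trans (hB z)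
  rcases le_or_gt (dist z x) M with hnear | hfar
  · have hweight : 1 ≤ (1 + M) ^ t * (1 + dist z x) ^ (-t) := by
      rw [Real.rpow_neg (by positivity), ← div_eq_mul_inv, one_le_div (by positivity)]
      exact Real.rpow_le_rpow (by positivity) (by linarith) ht
    nlinarith [hB z, hweight, mul_nonneg (le_max_right A 0) (by positivity : (0:ℝ) ≤ 2 ^ t)]
  · have hone : 1 ≤ dist z x := (le_max_right R 1).trans hfar.le
    have hdecay : dist z x ^ (-t) ≤ 2 ^ t * (1 + dist z x) ^ (-t) := by
      calc dist z x ^ (-t) ≤ ((1 + dist z x) / 2) ^ (-t) :=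
            Real.rpow_le_rpow_of_nonpos (by positivity) (by linarith) (by linarith)
        _ = 2 ^ t * (1 + dist z x) ^ (-t) := by
          rw [Real.div_rpow (by positivity) zero_le_two, Real.rpow_neg zero_le_two,
            div_inv_eq_mul, mul_comm]
    calc |g z| ≤ A * dist z x ^ (-t) := hA z ((le_max_left R 1).trans hfar.le)
      _ ≤ max A 0 * dist z x ^ (-t) := by gcongr; exact le_max_left A 0
      _ ≤ max A 0 * (2 ^ t * (1 + dist z x) ^ (-t)) := by gcongr
      _ ≤ _ := by nlinarith [mul_nonneg hB₀ (by positivity : (0:ℝ) ≤ (1 + M) ^ t)]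

section TruncatedKernel

variable {α : Type*} [PseudoMetricSpace α]

noncomputable def truncatedKernel (s r : ℝ) (x z : α) : ℝ :=
  if r ≤ dist z x then dist x z ^ (-s) else 0

variable {s r : ℝ}

lemma abs_truncatedKernel_le (hs : 0 ≤ s) (hr : 0 < r) (x z : α) :
    |truncatedKernel s r x z| ≤ r ^ (-s) := by
  unfold truncatedKernel
  split_ifs with h
  · rw [abs_of_nonneg (by positivity), dist_comm]
    exact Real.rpow_le_rpow_of_nonpos hr h (by linarith)
  · simpa using (by positivity : 0 ≤ r ^ (-s))

lemma abs_truncatedKernel_sub_le_of_le_dist (hs : 0 < s) (hr : 0 < r) {x y z : α}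
    (hz : 2 * dist x y + r ≤ dist z x) :
    |truncatedKernel s r x z - truncatedKernel s r y z|
      ≤ s * 2 ^ (s + 1) * dist x y * dist z x ^ (-(s + 1)) := by
  have hxz : dist x z = dist z x := dist_comm x z
  have hyz : |dist x z - dist y z| ≤ dist x y := abs_dist_sub_le x y z
  have hzy : dist z x - dist x y ≤ dist z y := by
    rw [dist_comm z y, ← hxz]; linarith [(abs_le.mp hyz).2]
  have hd : 0 ≤ dist x y := dist_nonneg
  unfold truncatedKernel
  rw [if_pos (by linarith), if_pos (by linarith)]
  have hu : 0 < dist z x / 2 := by linarith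
  calc |dist x z ^ (-s) - dist y z ^ (-s)|
      ≤ s * (dist z x / 2) ^ (-(s + 1)) * |dist x z - dist y z| :=
        abs_rpow_neg_sub_rpow_neg_le hs hu (by linarith) (by rw [dist_comm y z]; linarith)
    _ ≤ s * (dist z x / 2) ^ (-(s + 1)) * dist x y := by gcongr
    _ = s * 2 ^ (s + 1) * dist x y * dist z x ^ (-(s + 1)) := by
        rw [Real.div_rpow (by linarith) zero_le_two, Real.rpow_neg zero_le_two, div_inv_eq_mul]
        ring

lemma measurable_truncatedKernel [MeasurableSpace α] [OpensMeasurableSpace α] (x : α) :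
    Measurable (truncatedKernel s r x) :=
  .ite (measurableSet_le measurable_const (continuous_id.dist continuous_const).measurable)
    ((continuous_const.dist continuous_id).measurable.pow_const _) measurable_const

lemma exists_abs_truncatedKernel_sub_le (hs : 0 < s) (hr : 0 < r) (x y : α) :
    ∃ C, ∀ z, |truncatedKernel s r x z - truncatedKernel s r y z|
      ≤ C * (1 + dist z x) ^ (-(s + 1)) := by
  refine exists_abs_le_mul_one_add_dist_rpow_neg (B := 2 * r ^ (-s)) (by linarith)
    (fun z => ?_) (fun z hz => abs_truncatedKernel_sub_le_of_le_dist hs hr hz)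
  linarith [abs_sub (truncatedKernel s r x z) (truncatedKernel s r y z),
    abs_truncatedKernel_le hs.le hr x z, abs_truncatedKernel_le hs.le hr y z]

end TruncatedKernel

section HaarMeasure

variable {E : Type*} [NormedAddCommGroup E] [NormedSpace ℝ E] [FiniteDimensional ℝ E]
  [MeasurableSpace E] [BorelSpace E] {μ : Measure E} [μ.IsAddHaarMeasure]

lemma memLp_one_add_dist_rpow_neg (x : E) {s : ℝ} (hs₀ : 0 < s)
    (hs : (Module.finrank ℝ E : ℝ) ≤ s) {p : ℝ≥0∞} (hp : 1 < p) :
    MemLp (fun z => (1 + dist z x) ^ (-s)) p μ := by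
  have hmeas : AEStronglyMeasurable (fun z => (1 + dist z x) ^ (-s)) μ :=
    Measurable.aestronglyMeasurable (by fun_prop)
  rcases eq_or_ne p ∞ with rfl | hp_top
  · refine memLp_top_of_bound hmeas 1 (.of_forall fun z => ?_)
    rw [Real.norm_of_nonneg (by positivity)]
    exact Real.rpow_le_one_of_one_le_of_nonpos (by simp) (by linarith)
  have hp1 : 1 < p.toReal := by
    simpa using ENNReal.toReal_strict_mono hp_top hp
  rw [← integrable_norm_rpow_iff hmeas (zero_lt_one.trans hp).ne' hp_top]
  have hint : Integrable (fun z : E => (1 + ‖z‖) ^ (-(s * p.toReal))) μ :=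
    integrable_one_add_norm (by nlinarith)
  refine (hint.comp_sub_right x).congr (.of_forall fun z => ?_)
  simp only [dist_eq_norm]
  rw [Real.norm_of_nonneg (by positivity), ← Real.rpow_mul (by positivity), neg_mul]

lemma memLp_truncatedKernel_sub {s r : ℝ} (hs : 0 < s)
    (hdim : (Module.finrank ℝ E : ℝ) ≤ s + 1) (hr : 0 < r) (x y : E) {p : ℝ≥0∞}
    (hp : 1 < p) :
    MemLp (fun z => truncatedKernel s r x z - truncatedKernel s r y z) p μ := by
  obtain ⟨C, hC⟩ := exists_abs_truncatedKernel_sub_le hs hr x y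
  refine ((memLp_one_add_dist_rpow_neg x (by linarith) hdim hp).const_mul C).of_le
    ((measurable_truncatedKernel x).sub (measurable_truncatedKernel y)).aestronglyMeasurable
    (.of_forall fun z => ?_)
  simpa only [Real.norm_eq_abs] using (hC z).trans (le_abs_self _)

end HaarMeasure

lemma MemLp.integrable_mul_of_forall_one_lt {Ω : Type*} [MeasurableSpace Ω] {μ : Measure Ω}
    {f g : Ω → ℝ} {q : ℝ≥0∞} (hf : MemLp f q μ) (hq : 1 ≤ q) (hq_top : q ≠ ∞)
    (hg : ∀ p, 1 < p → MemLp g p μ) : Integrable (fun z => g z * f z) μ := by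
  have : ENNReal.HolderTriple q.conjExponent q 1 := (ENNReal.HolderConjugate.conjExponent hq).symm
  have hp : 1 < q.conjExponent :=
    ENNReal.lt_add_right ENNReal.one_ne_top (ENNReal.inv_ne_zero.mpr (ENNReal.sub_ne_top hq_top))
  exact memLp_one_iff_integrable.mp (hf.mul' (hg _ hp))

/-- For n ≥ 2, 1 ≤ q < ∞, f ∈ L^q(ℝ^n), x, y ∈ ℝ^n and r > 0, the integral
∫ |K(z)| |f(z)| dz is finite, where
K(z) = |x−z|^{-(n-1)} 𝟙_{|z−x|≥r}(z) − |y−z|^{-(n-1)} 𝟙_{|z−y|≥r}(z);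
in particular the integral formally defining J_r(f)(x) − J_r(f)(y) converges absolutely. -/
theorem stmt_7 (n : ℕ) (hn : 2 ≤ n) (q : ℝ) (hq1 : 1 ≤ q)
    (f : EuclideanSpace ℝ (Fin n) → ℝ)
    (hf : MemLp f (ENNReal.ofReal q) volume)
    (x y : EuclideanSpace ℝ (Fin n)) (r : ℝ) (hr : 0 < r) :
    ∫⁻ z, ENNReal.ofReal
        |(if r ≤ dist z x then dist x z ^ (-((n : ℝ) - 1)) else 0) -
          (if r ≤ dist z y then dist y z ^ (-((n : ℝ) - 1)) else 0)| *
        (‖f z‖₊ : ENNReal) ∂volume < ⊤ := by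
  have hs : (0 : ℝ) < n - 1 := by
    have : (2 : ℝ) ≤ n := by exact_mod_cast hn
    linarith
  have hKf := MemLp.integrable_mul_of_forall_one_lt hf (by simpa using hq1) ENNReal.ofReal_ne_top
    fun p hp => memLp_truncatedKernel_sub hs (by simp) hr x y hp
  refine lt_of_eq_of_lt (lintegral_congr fun z => ?_) hKf.hasFiniteIntegral
  rw [enorm_mul, Real.enorm_eq_ofReal_abs, enorm_eq_nnnorm]
  -- the integrand of the statement is `truncatedKernel (n - 1) r` unfolded
  rfl
end

section
/- Let n ≥ 2 be an integer. There is a constant C = C(n) > 0 such that for every r > 0, all x, y, z ∈ ℝ^n with |x−y| ≤ r, x ≠ z, and y ≠ z, one has | |x−z|^{-(n-1)} 𝟙_{{|z−x| ≥ r}}(z) − |y−z|^{-(n-1)} 𝟙_{{|z−y| ≥ r}}(z) − (n−1) (y−x) · (x−z) |x−z|^{-(n+1)} 𝟙_{{|z−x| ≥ r}}(z) | ≤ C r^2 / (|x−z|^{n+1} + r^{n+1}). -/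
/-!
Write `d = |x - z|`, `e = |y - z|`, `s = |x - y|` and `t = ⟪y - x, x - z⟫`, so that
`e² = d² + 2t + s²`. If `d ≥ 2r`, both indicators equal `1` and, up to the term
`(n-1)/2 · s² d^{-(n+1)}`, the expression is the second-order Taylor remainder of `v ↦ v ^ (-(n-1)/2)` between `d²` and `e²`.
Since `|e² - d²| ≤ 3sd` and `e² ≥ d²/4`, it is `O(s² d^{-(n+1)})`, and `d^{n+1}` is comparable to
`d^{n+1} + r^{n+1}`. If `d ≤ 2r`, each of the three terms is `O(r^{-(n-1)})` while the denominator is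
`O(r^{n+1})`.
-/

open Set
open scoped RealInnerProductSpace

theorem abs_sub_sub_mul_le_of_abs_deriv2_le {f f' f'' : ℝ → ℝ} {a b M : ℝ} (hab : a ≤ b)
    (hf : ∀ u ∈ Icc a b, HasDerivAt f (f' u) u)
    (hf' : ∀ u ∈ Icc a b, HasDerivAt f' (f'' u) u)
    (hM : ∀ u ∈ Icc a b, |f'' u| ≤ M) :
    |f b - f a - f' a * (b - a)| ≤ M * (b - a) ^ 2 := by
  have ha : a ∈ Icc a b := left_mem_Icc.2 hab
  have hb : b ∈ Icc a b := right_mem_Icc.2 hab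
  have hf'_sub : ∀ u ∈ Icc a b, |f' u - f' a| ≤ M * (b - a) := by
    intro u hu
    have h := (convex_Icc a b).norm_image_sub_le_of_norm_hasDerivWithin_le
      (fun v hv => (hf' v hv).hasDerivWithinAt) hM ha hu
    rw [Real.norm_eq_abs, Real.norm_of_nonneg (sub_nonneg.2 hu.1)] at h
    exact h.trans (mul_le_mul_of_nonneg_left (by linarith [hu.2])
      ((abs_nonneg _).trans (hM a ha)))
  have h := (convex_Icc a b).norm_image_sub_le_of_norm_hasDerivWithin_le
    (f := fun u => f u - f' a * u)
    (fun v hv => (((hf v hv).sub ((hasDerivAt_id v).const_mul (f' a))).congr_deriv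
      (by simp)).hasDerivWithinAt) hf'_sub ha hb
  rw [Real.norm_eq_abs, Real.norm_of_nonneg (sub_nonneg.2 hab)] at h
  calc |f b - f a - f' a * (b - a)| = |f b - f' a * b - (f a - f' a * a)| := by ring_nf
    _ ≤ M * (b - a) * (b - a) := h
    _ = M * (b - a) ^ 2 := by ring

theorem abs_rpow_sub_rpow_sub_mul_le {q m v₀ v : ℝ} (hq : q ≤ 2) (hm : 0 < m) (hv₀ : m ≤ v₀)
    (hv : m ≤ v) :
    |v ^ q - v₀ ^ q - q * v₀ ^ (q - 1) * (v - v₀)| ≤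
      |q * (q - 1)| * m ^ (q - 2) * (v - v₀) ^ 2 := by
  set w : ℝ → ℝ := fun u => v₀ + u * (v - v₀)
  have hw : ∀ u ∈ Icc (0 : ℝ) 1, m ≤ w u := fun u hu => by
    simp only [w]; nlinarith [hu.1, hu.2]
  have hw' : ∀ u, HasDerivAt w (v - v₀) u := fun u =>
    (((hasDerivAt_id u).mul_const (v - v₀)).const_add v₀).congr_deriv (one_mul _)
  have h := abs_sub_sub_mul_le_of_abs_deriv2_le zero_le_one
    (f := fun u => w u ^ q) (f' := fun u => q * w u ^ (q - 1) * (v - v₀))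
    (f'' := fun u => q * ((v - v₀) * (q - 1) * w u ^ (q - 2)) * (v - v₀))
    (M := |q * (q - 1)| * m ^ (q - 2) * (v - v₀) ^ 2)
    (fun u hu => ((hw' u).rpow_const (p := q) (Or.inl (hm.trans_le (hw u hu)).ne')).congr_deriv
      (by ring))
    (fun u hu => by
      have h := (hw' u).rpow_const (p := q - 1) (Or.inl (hm.trans_le (hw u hu)).ne')
      rw [show q - 1 - 1 = q - 2 by ring] at h
      exact (h.const_mul q).mul_const (v - v₀))
    (fun u hu => by
      have hpow := Real.rpow_le_rpow_of_nonpos hm (hw u hu) (by linarith : q - 2 ≤ 0)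
      rw [show q * ((v - v₀) * (q - 1) * w u ^ (q - 2)) * (v - v₀) =
          q * (q - 1) * (v - v₀) ^ 2 * w u ^ (q - 2) by ring, abs_mul, abs_mul, abs_sq,
        abs_of_nonneg (Real.rpow_nonneg (hm.le.trans (hw u hu)) _), mul_right_comm]
      gcongr)
  simpa [w] using h

theorem sq_rpow_eq_rpow_two_mul {x : ℝ} (hx : 0 ≤ x) (y : ℝ) : (x ^ 2) ^ y = x ^ (2 * y) := by
  rw [← Real.rpow_natCast_mul hx]; norm_num

theorem exists_abs_rpow_sub_rpow_sub_le {p : ℝ} (hp : 0 ≤ p) :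
    ∃ K, 0 ≤ K ∧ ∀ d e s t : ℝ, 0 < d → 2 * s ≤ d → |t| ≤ s * d →
      e ^ 2 = d ^ 2 + 2 * t + s ^ 2 → 0 ≤ e →
      |d ^ (-p) - e ^ (-p) - p * (t * d ^ (-(p + 2)))| ≤ K * s ^ 2 * d ^ (-(p + 2)) := by
  set q := -p / 2 with hq
  refine ⟨36 * |q * (q - 1)| / 4 ^ (q - 1) + p / 2, by positivity, ?_⟩
  intro d e s t hd hsd ht hde he
  obtain ⟨htl, htu⟩ := abs_le.1 ht
  have hm : 0 < d ^ 2 / 4 := by positivity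
  have htaylor := abs_rpow_sub_rpow_sub_mul_le (by linarith : q ≤ 2) hm
    (by linarith : d ^ 2 / 4 ≤ d ^ 2) (by nlinarith : d ^ 2 / 4 ≤ e ^ 2)
  set W := d ^ (-(p + 2))
  have hW : (d ^ 2) ^ (q - 1) = W := by rw [sq_rpow_eq_rpow_two_mul hd.le, hq]; congr 1; ring
  have hmW : (d ^ 2 / 4) ^ (q - 2) * d ^ 2 = 4 * W / 4 ^ (q - 1) := by
    rw [show q - 2 = q - 1 - 1 by ring, Real.rpow_sub_one hm.ne',
      Real.div_rpow (by positivity) (by norm_num), hW]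
    field_simp
  have hinc : (e ^ 2 - d ^ 2) ^ 2 ≤ 9 * s ^ 2 * d ^ 2 := by
    rw [hde, show d ^ 2 + 2 * t + s ^ 2 - d ^ 2 = 2 * t + s ^ 2 by ring,
      show 9 * s ^ 2 * d ^ 2 = (3 * s * d) ^ 2 by ring]
    exact sq_le_sq' (by nlinarith) (by nlinarith)
  set R := (e ^ 2) ^ q - (d ^ 2) ^ q - q * (d ^ 2) ^ (q - 1) * (e ^ 2 - d ^ 2) with hR
  have hsplit : d ^ (-p) - e ^ (-p) - p * (t * W) = -R + p / 2 * s ^ 2 * W := by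
    rw [hR, sq_rpow_eq_rpow_two_mul hd.le, sq_rpow_eq_rpow_two_mul he, hW, hde, hq]
    ring_nf
  have hW0 : 0 ≤ W := Real.rpow_nonneg hd.le _
  rw [hsplit]
  calc |-R + p / 2 * s ^ 2 * W| ≤ |R| + p / 2 * s ^ 2 * W := by
        refine (abs_add_le _ _).trans ?_
        rw [abs_neg, abs_of_nonneg (by positivity : 0 ≤ p / 2 * s ^ 2 * W)]
    _ ≤ |q * (q - 1)| * (d ^ 2 / 4) ^ (q - 2) * (9 * s ^ 2 * d ^ 2) + p / 2 * s ^ 2 * W := by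
        gcongr
        exact htaylor.trans (by gcongr)
    _ = 9 * |q * (q - 1)| * s ^ 2 * ((d ^ 2 / 4) ^ (q - 2) * d ^ 2) + p / 2 * s ^ 2 * W := by
        ring
    _ = _ := by
        rw [hmW]
        ring

theorem abs_ite_rpow_neg_le {p r d : ℝ} (hp : 0 ≤ p) (hr : 0 < r) :
    |if r ≤ d then d ^ (-p) else 0| ≤ r ^ (-p) := by
  split_ifs with hrd
  · rw [abs_of_nonneg (Real.rpow_nonneg (hr.le.trans hrd) _)]
    exact Real.rpow_le_rpow_of_nonpos hr hrd (neg_nonpos.2 hp)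
  · simpa using (Real.rpow_pos_of_pos hr _).le

theorem abs_ite_mul_rpow_neg_le {p r d s t : ℝ} (hp : 0 ≤ p) (hr : 0 < r) (hsr : s ≤ r)
    (ht : |t| ≤ s * d) :
    |if r ≤ d then t * d ^ (-(p + 2)) else 0| ≤ r ^ (-p) := by
  split_ifs with hrd
  · have hd := hr.trans_le hrd
    calc |t * d ^ (-(p + 2))| ≤ s * d * d ^ (-(p + 2)) := by
          rw [abs_mul, abs_of_nonneg (Real.rpow_nonneg hd.le _)]
          gcongr
      _ = s * d ^ (-(p + 1)) := by
          rw [mul_assoc, mul_comm d, ← Real.rpow_add_one hd.ne']; ring_nf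
      _ ≤ r * r ^ (-(p + 1)) :=
          mul_le_mul hsr (Real.rpow_le_rpow_of_nonpos hr hrd (by linarith))
            (Real.rpow_nonneg hd.le _) hr.le
      _ = r ^ (-p) := by
          rw [mul_comm, ← Real.rpow_add_one hr.ne']; ring_nf
  · simpa using (Real.rpow_pos_of_pos hr _).le

theorem abs_ite_rpow_sub_le_of_le_two_mul {p r d e s t : ℝ} (hp : 0 ≤ p) (hr : 0 < r)
    (hd : 0 ≤ d) (hdr : d ≤ 2 * r) (hsr : s ≤ r) (ht : |t| ≤ s * d) :
    |(if r ≤ d then d ^ (-p) else 0) - (if r ≤ e then e ^ (-p) else 0) -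
        p * (if r ≤ d then t * d ^ (-(p + 2)) else 0)| ≤
      (p + 2) * (2 ^ (p + 2) + 1) * r ^ 2 / (d ^ (p + 2) + r ^ (p + 2)) := by
  have hterms : |(if r ≤ d then d ^ (-p) else 0) - (if r ≤ e then e ^ (-p) else 0) -
      p * (if r ≤ d then t * d ^ (-(p + 2)) else 0)| ≤ (p + 2) * r ^ (-p) := by
    refine (abs_sub _ _).trans ?_
    rw [abs_mul, abs_of_nonneg hp]
    have := (abs_sub _ _).trans (add_le_add (abs_ite_rpow_neg_le (d := d) hp hr)
      (abs_ite_rpow_neg_le (d := e) hp hr))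
    have := abs_ite_mul_rpow_neg_le hp hr hsr ht
    nlinarith
  have hdenom : d ^ (p + 2) + r ^ (p + 2) ≤ (2 ^ (p + 2) + 1) * r ^ (p + 2) := by
    have := Real.rpow_le_rpow hd hdr (by linarith : 0 ≤ p + 2)
    rw [Real.mul_rpow zero_le_two hr.le] at this
    linarith
  have hr2 : r ^ (-p) * r ^ (p + 2) = r ^ 2 := by
    rw [← Real.rpow_add hr, neg_add_cancel_left, Real.rpow_two]
  rw [le_div_iff₀ (by positivity)]
  calc _ ≤ (p + 2) * r ^ (-p) * ((2 ^ (p + 2) + 1) * r ^ (p + 2)) := by gcongr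
    _ = _ := by rw [← hr2]; ring

section InnerProductSpace

variable {E : Type*} [NormedAddCommGroup E] [InnerProductSpace ℝ E]

theorem dist_sq_eq_dist_sq_add_inner_add (x y z : E) :
    dist y z ^ 2 = dist x z ^ 2 + 2 * ⟪y - x, x - z⟫ + dist x y ^ 2 := by
  rw [dist_eq_norm, dist_eq_norm, dist_comm, dist_eq_norm, ← sub_add_sub_cancel y x z,
    norm_add_sq_real]
  ring

theorem abs_inner_sub_le_dist_mul_dist (x y z : E) :
    |⟪y - x, x - z⟫| ≤ dist x y * dist x z := by
  rw [dist_comm, dist_eq_norm, dist_eq_norm]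
  exact abs_real_inner_le_norm _ _

theorem exists_abs_ite_dist_rpow_sub_le {p : ℝ} (hp : 0 ≤ p) :
    ∃ C > 0, ∀ r : ℝ, 0 < r → ∀ x y z : E, dist x y ≤ r →
      |(if r ≤ dist z x then dist x z ^ (-p) else 0) -
        (if r ≤ dist z y then dist y z ^ (-p) else 0) -
        p * (if r ≤ dist z x then ⟪y - x, x - z⟫ * dist x z ^ (-(p + 2)) else 0)|
        ≤ C * r ^ 2 / (dist x z ^ (p + 2) + r ^ (p + 2)) := by
  obtain ⟨K, hK, hfar⟩ := exists_abs_rpow_sub_rpow_sub_le hp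
  refine ⟨(p + 2) * (2 ^ (p + 2) + 1) + 2 * K, by positivity, fun r hr x y z hxy => ?_⟩
  rw [dist_comm z x, dist_comm z y]
  have ht := abs_inner_sub_le_dist_mul_dist x y z
  have hD : 0 < dist x z ^ (p + 2) + r ^ (p + 2) := by positivity
  rcases le_total (dist x z) (2 * r) with hnear | hrd
  · refine (abs_ite_rpow_sub_le_of_le_two_mul hp hr dist_nonneg hnear hxy ht).trans ?_
    gcongr
    linarith
  have hrx : r ≤ dist x z := by linarith
  have hry : r ≤ dist y z := by linarith [(abs_le.1 (abs_dist_sub_le x y z)).2]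
  rw [if_pos hrx, if_pos hry, if_pos hrx]
  have hdx := hr.trans_le hrx
  have hW : dist x z ^ (-(p + 2)) * (dist x z ^ (p + 2) + r ^ (p + 2)) ≤ 2 := by
    rw [Real.rpow_neg hdx.le, ← div_eq_inv_mul, div_le_iff₀ (by positivity)]
    linarith [Real.rpow_le_rpow hr.le hrx (by linarith : 0 ≤ p + 2)]
  refine (hfar _ _ _ _ hdx (by linarith) ht
    (dist_sq_eq_dist_sq_add_inner_add x y z) dist_nonneg).trans ?_
  rw [le_div_iff₀ hD]
  calc K * dist x y ^ 2 * dist x z ^ (-(p + 2)) * (dist x z ^ (p + 2) + r ^ (p + 2))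
      ≤ K * r ^ 2 * 2 := by
        rw [mul_assoc]
        gcongr
    _ ≤ ((p + 2) * (2 ^ (p + 2) + 1) + 2 * K) * r ^ 2 := by
        nlinarith [sq_nonneg r, show 0 ≤ (p + 2) * (2 ^ (p + 2) + 1) by positivity]

end InnerProductSpace

/-- For n ≥ 2 there is C = C(n) > 0 so that for every r > 0 and all x, y, z ∈ ℝ^n
with |x−y| ≤ r, x ≠ z, y ≠ z:
| |x−z|^{-(n-1)} 𝟙_{|z−x|≥r} − |y−z|^{-(n-1)} 𝟙_{|z−y|≥r}
  − (n−1)(y−x)·(x−z)|x−z|^{-(n+1)} 𝟙_{|z−x|≥r} | ≤ C r² / (|x−z|^{n+1} + r^{n+1}). -/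
theorem stmt_10 (n : ℕ) (hn : 2 ≤ n) :
    ∃ C > 0, ∀ r : ℝ, 0 < r → ∀ x y z : EuclideanSpace ℝ (Fin n),
      dist x y ≤ r → x ≠ z → y ≠ z →
      |(if r ≤ dist z x then dist x z ^ (-((n : ℝ) - 1)) else 0) -
        (if r ≤ dist z y then dist y z ^ (-((n : ℝ) - 1)) else 0) -
        ((n : ℝ) - 1) *
          (if r ≤ dist z x then ⟪y - x, x - z⟫ * dist x z ^ (-((n : ℝ) + 1)) else 0)|
        ≤ C * r ^ 2 / (dist x z ^ ((n : ℝ) + 1) + r ^ ((n : ℝ) + 1)) := by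
  have hp : (0 : ℝ) ≤ n - 1 := by
    have : (2 : ℝ) ≤ n := by exact_mod_cast hn
    linarith
  obtain ⟨C, hC, hbound⟩ := exists_abs_ite_dist_rpow_sub_le (E := EuclideanSpace ℝ (Fin n)) hp
  refine ⟨C, hC, fun r hr x y z hxy _ _ => ?_⟩
  simpa only [show (n : ℝ) - 1 + 2 = n + 1 by ring] using hbound r hr x y z hxy
end

section
/- Let m be a positive integer, let E ⊆ ℝ^m, let n > 1 be a real number, let 0 < α < 1, and suppose ρ is a metric on E and C₁ ≥ 1 a constant with C₁^{-1}|x−y| ≤ ρ(x,y)^α ≤ C₁|x−y| for all x, y ∈ E. Then there is a constant C > 0, depending only on C₁, α, and n, such that for every r > 0 and all x, y, z ∈ E with |x−y| ≤ r, one has | ρ(x,z)^{-α(n-1)} 𝟙_{{|z−x| ≥ r}}(z) − ρ(y,z)^{-α(n-1)} 𝟙_{{|z−y| ≥ r}}(z) | ≤ C r^{1/α} / (|x−z|^{(n-1)+1/α} + r^{(n-1)+1/α}), where each term on the left is interpreted as 0 when the corresponding indicator vanishes. -/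
open Metric

set_option maxHeartbeats 1000000

private lemma rpow_neg_lipschitz {β a b : ℝ} (hβ : 0 < β) (hb : 0 < b) (hba : b ≤ a) :
    b ^ (-β) - a ^ (-β) ≤ β * (a - b) * b ^ (-(β + 1)) := by
  rcases eq_or_lt_of_le hba with h | h
  · rw [h]; simp
  · have ha : 0 < a := hb.trans h
    obtain ⟨c, hc, hder⟩ := exists_hasDerivAt_eq_slope (fun t => t ^ (-β))
      (fun t => (-β) * t ^ (-β - 1)) h
      (fun t ht => (Real.continuousAt_rpow_const t (-β)
        (Or.inl (hb.trans_le ht.1).ne')).continuousWithinAt)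
      (fun t ht => Real.hasDerivAt_rpow_const (Or.inl (hb.trans ht.1).ne'))
    have hab : (0:ℝ) < a - b := sub_pos.2 h
    rw [eq_div_iff hab.ne'] at hder
    have hcb : c ^ (-β - 1) ≤ b ^ (-β - 1) :=
      Real.rpow_le_rpow_of_nonpos hb hc.1.le (by linarith)
    have key : b ^ (-β) - a ^ (-β) = β * c ^ (-β - 1) * (a - b) := by
      linear_combination hder
    rw [key]
    calc β * c ^ (-β - 1) * (a - b) ≤ β * b ^ (-β - 1) * (a - b) := by
          apply mul_le_mul_of_nonneg_right _ hab.le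
          exact mul_le_mul_of_nonneg_left hcb hβ.le
      _ = β * (a - b) * b ^ (-(β + 1)) := by
          rw [show -(β + 1) = -β - 1 by ring]; ring

private lemma abs_rpow_neg_sub_le {β a b : ℝ} (hβ : 0 < β) (ha : 0 < a) (hb : 0 < b) :
    |a ^ (-β) - b ^ (-β)| ≤ β * |a - b| * (min a b) ^ (-(β + 1)) := by
  rcases le_total b a with hba | hab
  · rw [min_eq_right hba, abs_of_nonneg (sub_nonneg.2 hba),
      abs_of_nonpos (sub_nonpos.2 (Real.rpow_le_rpow_of_nonpos hb hba (neg_nonpos.2 hβ.le)))]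
    have := rpow_neg_lipschitz hβ hb hba; linarith
  · rw [min_eq_left hab, abs_sub_comm a b, abs_of_nonneg (sub_nonneg.2 hab),
      abs_of_nonneg (sub_nonneg.2 (Real.rpow_le_rpow_of_nonpos ha hab (neg_nonpos.2 hβ.le)))]
    have := rpow_neg_lipschitz hβ ha hab; linarith

/-- Snowflake kernel estimate with truncations: for a real n > 1, 0 < α < 1,
C₁ ≥ 1, there is C > 0 depending only on C₁, α, n such that whenever E ⊆ ℝ^m
carries a metric ρ with C₁^{-1}|x−y| ≤ ρ(x,y)^α ≤ C₁|x−y| on E, then for every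
r > 0 and x, y, z ∈ E with |x−y| ≤ r:
|ρ(x,z)^{-α(n-1)} 𝟙_{|z−x|≥r} − ρ(y,z)^{-α(n-1)} 𝟙_{|z−y|≥r}|
  ≤ C r^{1/α} / (|x−z|^{(n-1)+1/α} + r^{(n-1)+1/α}). -/
theorem stmt_17 (n α C₁ : ℝ) (hn : 1 < n) (hα0 : 0 < α) (hα1 : α < 1) (hC₁ : 1 ≤ C₁) :
    ∃ C > 0, ∀ (m : ℕ), 0 < m →
      ∀ (E : Set (EuclideanSpace ℝ (Fin m)))
        (ρ : EuclideanSpace ℝ (Fin m) → EuclideanSpace ℝ (Fin m) → ℝ),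
      (∀ x ∈ E, ∀ y ∈ E, 0 ≤ ρ x y) →
      (∀ x ∈ E, ρ x x = 0) →
      (∀ x ∈ E, ∀ y ∈ E, ρ x y = 0 → x = y) →
      (∀ x ∈ E, ∀ y ∈ E, ρ x y = ρ y x) →
      (∀ x ∈ E, ∀ y ∈ E, ∀ z ∈ E, ρ x z ≤ ρ x y + ρ y z) →
      (∀ x ∈ E, ∀ y ∈ E, C₁⁻¹ * dist x y ≤ ρ x y ^ α ∧ ρ x y ^ α ≤ C₁ * dist x y) →
      ∀ r : ℝ, 0 < r → ∀ x ∈ E, ∀ y ∈ E, ∀ z ∈ E, dist x y ≤ r →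
        |(if r ≤ dist z x then ρ x z ^ (-(α * (n - 1))) else 0) -
          (if r ≤ dist z y then ρ y z ^ (-(α * (n - 1))) else 0)|
          ≤ C * r ^ (1 / α) /
              (dist x z ^ ((n - 1) + 1 / α) + r ^ ((n - 1) + 1 / α)) := by
  have hn1 : 0 < n - 1 := by linarith
  have hC₁0 : 0 < C₁ := by linarith
  set s : ℝ := (n - 1) + 1 / α with hs_def
  have hs : 0 < s := by
    have h1 : 0 < 1 / α := by positivity
    rw [hs_def]; linarith
  set β : ℝ := α * (n - 1) with hβ_def
  have hβ : 0 < β := mul_pos hα0 hn1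
  set C : ℝ := (2 ^ s + 1) * C₁ ^ (n - 1) + 2 * β * C₁ ^ (1 / α) * (4 * C₁) ^ s + 1
    with hC_def
  have hC : 0 < C := by rw [hC_def]; positivity
  refine ⟨C, hC, ?_⟩
  intro m hm E ρ hρnn hρ0 hρsep hρsymm hρtri hsnow r hr x hx y hy z hz hxy
  have hdenom : 0 < dist x z ^ s + r ^ s := by positivity
  have hr1α : 0 < r ^ (1 / α) := Real.rpow_pos_of_pos hr _
  -- generic upper bound for the truncated kernel
  have key1 : ∀ w : ℝ, 0 ≤ w → C₁⁻¹ * r ≤ w ^ α →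
      w ^ (-β) ≤ C₁ ^ (n - 1) * r ^ (-(n - 1)) := by
    intro w hw hwα
    have h0 : 0 < C₁⁻¹ * r := by positivity
    have hrw : w ^ (-β) = (w ^ α) ^ (-(n - 1)) := by
      rw [← Real.rpow_mul hw]; congr 1; rw [hβ_def]; ring
    rw [hrw]
    calc (w ^ α) ^ (-(n - 1)) ≤ (C₁⁻¹ * r) ^ (-(n - 1)) :=
          Real.rpow_le_rpow_of_nonpos h0 hwα (by linarith)
      _ = C₁ ^ (n - 1) * r ^ (-(n - 1)) := by
          rw [Real.mul_rpow (by positivity) hr.le, Real.inv_rpow hC₁0.le,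
            Real.rpow_neg hC₁0.le, inv_inv]
  -- generic lower bound for the right-hand side when dist x z ≤ 2 r
  have key2 : dist x z ≤ 2 * r →
      C₁ ^ (n - 1) * r ^ (-(n - 1)) ≤ C * r ^ (1 / α) / (dist x z ^ s + r ^ s) := by
    intro hD2
    have h1 : dist x z ^ s ≤ 2 ^ s * r ^ s := by
      calc dist x z ^ s ≤ (2 * r) ^ s := Real.rpow_le_rpow dist_nonneg hD2 hs.le
        _ = 2 ^ s * r ^ s := Real.mul_rpow (by norm_num) hr.le
    rw [le_div_iff₀ hdenom]
    have h3 : r ^ (-(n - 1)) * r ^ s = r ^ (1 / α) := by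
      rw [← Real.rpow_add hr]; congr 1; rw [hs_def]; ring
    have hCge : (2 ^ s + 1) * C₁ ^ (n - 1) ≤ C := by
      have t1 : (0:ℝ) ≤ 2 * β * C₁ ^ (1 / α) * (4 * C₁) ^ s := by positivity
      rw [hC_def]; linarith
    calc C₁ ^ (n - 1) * r ^ (-(n - 1)) * (dist x z ^ s + r ^ s)
        ≤ C₁ ^ (n - 1) * r ^ (-(n - 1)) * ((2 ^ s + 1) * r ^ s) := by
          apply mul_le_mul_of_nonneg_left (by linarith) (by positivity)
      _ = (2 ^ s + 1) * C₁ ^ (n - 1) * (r ^ (-(n - 1)) * r ^ s) := by ring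
      _ = (2 ^ s + 1) * C₁ ^ (n - 1) * r ^ (1 / α) := by rw [h3]
      _ ≤ C * r ^ (1 / α) := by
          apply mul_le_mul_of_nonneg_right hCge hr1α.le
  by_cases hzx : r ≤ dist z x <;> by_cases hzy : r ≤ dist z y
  · -- both indicators are 1
    rw [if_pos hzx, if_pos hzy]
    have haα := (hsnow x hx z hz).1
    have hbα := (hsnow y hy z hz).1
    have hpα := (hsnow x hx y hy).2
    have hDr : r ≤ dist x z := by rwa [dist_comm x z]
    have hdyz : r ≤ dist y z := by rwa [dist_comm y z]
    have hdyz2 : dist x z - r ≤ dist y z := by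
      have := dist_triangle x y z; linarith
    have hDpos : 0 < dist x z := lt_of_lt_of_le hr hDr
    have hdyzpos : 0 < dist y z := lt_of_lt_of_le hr hdyz
    have hapos : 0 < ρ x z := by
      rcases (hρnn x hx z hz).lt_or_eq with h | h
      · exact h
      · exfalso
        have h0 : (0:ℝ) < ρ x z ^ α :=
          lt_of_lt_of_le (mul_pos (inv_pos.2 hC₁0) hDpos) haα
        rw [← h, Real.zero_rpow hα0.ne'] at h0
        exact lt_irrefl 0 h0
    have hbpos : 0 < ρ y z := by
      rcases (hρnn y hy z hz).lt_or_eq with h | h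
      · exact h
      · exfalso
        have h0 : (0:ℝ) < ρ y z ^ α :=
          lt_of_lt_of_le (mul_pos (inv_pos.2 hC₁0) hdyzpos) hbα
        rw [← h, Real.zero_rpow hα0.ne'] at h0
        exact lt_irrefl 0 h0
    -- triangle inequality for ρ
    have htri1 : ρ x z ≤ ρ x y + ρ y z := hρtri x hx y hy z hz
    have htri2 : ρ y z ≤ ρ x y + ρ x z := by
      have := hρtri y hy x hx z hz
      rwa [hρsymm y hy x hx] at this
    have habs : |ρ x z - ρ y z| ≤ ρ x y := abs_sub_le_iff.2 ⟨by linarith, by linarith⟩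
    -- ρ x y is small
    have hpnn : 0 ≤ ρ x y := hρnn x hx y hy
    have hpsmall : ρ x y ≤ (C₁ * r) ^ (1 / α) := by
      have h1 : ρ x y ^ α ≤ C₁ * r :=
        le_trans hpα (mul_le_mul_of_nonneg_left hxy hC₁0.le)
      have h2 : (ρ x y ^ α) ^ (1 / α) ≤ (C₁ * r) ^ (1 / α) :=
        Real.rpow_le_rpow (by positivity) h1 (by positivity)
      rwa [← Real.rpow_mul hpnn, mul_one_div_cancel hα0.ne', Real.rpow_one] at h2
    -- lower bound on min
    set M : ℝ := min (ρ x z) (ρ y z) with hM_def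
    have hMpos : 0 < M := lt_min hapos hbpos
    have hMα : C₁⁻¹ * ((dist x z + r) / 4) ≤ M ^ α := by
      have ha4 : (dist x z + r) / 4 ≤ dist x z := by linarith
      have hb4 : (dist x z + r) / 4 ≤ dist y z := by
        have h0 : (0:ℝ) ≤ dist y z := dist_nonneg
        linarith
      have hinv : (0:ℝ) ≤ C₁⁻¹ := by positivity
      rcases min_cases (ρ x z) (ρ y z) with ⟨h, _⟩ | ⟨h, _⟩ <;> rw [hM_def, h]
      · exact le_trans (mul_le_mul_of_nonneg_left ha4 hinv) haα
      · exact le_trans (mul_le_mul_of_nonneg_left hb4 hinv) hbα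
    -- apply the mean value estimate
    have hmain := abs_rpow_neg_sub_le hβ hapos hbpos
    refine le_trans hmain ?_
    -- bound M ^ (-(β+1))
    have hβ1s : -(β + 1) = α * (-s) := by rw [hβ_def, hs_def]; field_simp
    have hMpow : M ^ (-(β + 1)) ≤ (4 * C₁) ^ s * (dist x z + r) ^ (-s) := by
      have h0 : 0 < C₁⁻¹ * ((dist x z + r) / 4) := by
        have : (0:ℝ) ≤ dist x z := dist_nonneg
        positivity
      have e1 : M ^ (-(β + 1)) = (M ^ α) ^ (-s) := by
        rw [hβ1s, Real.rpow_mul hMpos.le]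
      rw [e1]
      calc (M ^ α) ^ (-s) ≤ (C₁⁻¹ * ((dist x z + r) / 4)) ^ (-s) :=
            Real.rpow_le_rpow_of_nonpos h0 hMα (by linarith)
        _ = (4 * C₁) ^ s * (dist x z + r) ^ (-s) := by
            rw [show C₁⁻¹ * ((dist x z + r) / 4) = (4 * C₁)⁻¹ * (dist x z + r) by
              rw [mul_inv]; ring]
            rw [Real.mul_rpow (by positivity) (by positivity),
              Real.inv_rpow (by positivity : (0:ℝ) ≤ 4 * C₁),
              Real.rpow_neg (by positivity : (0:ℝ) ≤ 4 * C₁), inv_inv]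
    have hQ : 0 < (dist x z + r) ^ s := Real.rpow_pos_of_pos (by positivity) _
    have hd2 : dist x z ^ s + r ^ s ≤ 2 * (dist x z + r) ^ s := by
      have h1 : dist x z ^ s ≤ (dist x z + r) ^ s :=
        Real.rpow_le_rpow dist_nonneg (by linarith) hs.le
      have h2 : r ^ s ≤ (dist x z + r) ^ s :=
        Real.rpow_le_rpow hr.le (by linarith [dist_nonneg (x := x) (y := z)]) hs.le
      linarith
    have step : β * |ρ x z - ρ y z| * M ^ (-(β + 1)) ≤
        β * (C₁ * r) ^ (1 / α) * ((4 * C₁) ^ s * (dist x z + r) ^ (-s)) := by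
      have h1 : |ρ x z - ρ y z| ≤ (C₁ * r) ^ (1 / α) := le_trans habs hpsmall
      have hMnn : 0 ≤ M ^ (-(β + 1)) := Real.rpow_nonneg hMpos.le _
      have h2 : β * |ρ x z - ρ y z| * M ^ (-(β + 1)) ≤
          β * (C₁ * r) ^ (1 / α) * M ^ (-(β + 1)) := by
        apply mul_le_mul_of_nonneg_right _ hMnn
        exact mul_le_mul_of_nonneg_left h1 hβ.le
      refine le_trans h2 ?_
      exact mul_le_mul_of_nonneg_left hMpow (by positivity)
    refine le_trans step ?_
    have hcr : (C₁ * r) ^ (1 / α) = C₁ ^ (1 / α) * r ^ (1 / α) :=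
      Real.mul_rpow hC₁0.le hr.le
    have hKC : 2 * β * C₁ ^ (1 / α) * (4 * C₁) ^ s ≤ C := by
      have t1 : (0:ℝ) ≤ (2 ^ s + 1) * C₁ ^ (n - 1) := by positivity
      rw [hC_def]; linarith
    have efin : β * (C₁ * r) ^ (1 / α) * ((4 * C₁) ^ s * (dist x z + r) ^ (-s)) =
        (β * C₁ ^ (1 / α) * r ^ (1 / α) * (4 * C₁) ^ s) / (dist x z + r) ^ s := by
      rw [hcr, Real.rpow_neg (by positivity : (0:ℝ) ≤ dist x z + r)]; ring
    rw [efin, div_le_div_iff₀ hQ hdenom]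
    calc β * C₁ ^ (1 / α) * r ^ (1 / α) * (4 * C₁) ^ s * (dist x z ^ s + r ^ s)
        ≤ β * C₁ ^ (1 / α) * r ^ (1 / α) * (4 * C₁) ^ s * (2 * (dist x z + r) ^ s) := by
          apply mul_le_mul_of_nonneg_left hd2 (by positivity)
      _ = (2 * β * C₁ ^ (1 / α) * (4 * C₁) ^ s) * r ^ (1 / α) * (dist x z + r) ^ s := by
          ring
      _ ≤ C * r ^ (1 / α) * (dist x z + r) ^ s := by
          apply mul_le_mul_of_nonneg_right _ hQ.le
          exact mul_le_mul_of_nonneg_right hKC hr1α.le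
  · -- first indicator 1, second 0
    rw [if_pos hzx, if_neg hzy, sub_zero,
      abs_of_nonneg (Real.rpow_nonneg (hρnn x hx z hz) _)]
    have haα := (hsnow x hx z hz).1
    have hwα : C₁⁻¹ * r ≤ ρ x z ^ α := by
      refine le_trans ?_ haα
      have h : r ≤ dist x z := by rwa [dist_comm x z]
      exact mul_le_mul_of_nonneg_left h (inv_pos.2 hC₁0).le
    have hD2 : dist x z ≤ 2 * r := by
      have h1 := dist_triangle z y x
      have h2 : dist z y ≤ r := le_of_not_ge hzy
      have h3 : dist y x ≤ r := by rwa [dist_comm y x]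
      rw [dist_comm x z]; linarith
    exact le_trans (key1 _ (hρnn x hx z hz) hwα) (key2 hD2)
  · -- first indicator 0, second 1
    rw [if_neg hzx, if_pos hzy, zero_sub, abs_neg,
      abs_of_nonneg (Real.rpow_nonneg (hρnn y hy z hz) _)]
    have hbα := (hsnow y hy z hz).1
    have hwα : C₁⁻¹ * r ≤ ρ y z ^ α := by
      refine le_trans ?_ hbα
      have h : r ≤ dist y z := by rwa [dist_comm y z]
      exact mul_le_mul_of_nonneg_left h (inv_pos.2 hC₁0).le
    have hD2 : dist x z ≤ 2 * r := by
      have h2 : dist z x ≤ r := le_of_not_ge hzx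
      rw [dist_comm x z]; linarith
    exact le_trans (key1 _ (hρnn y hy z hz) hwα) (key2 hD2)
  · -- both indicators 0
    rw [if_neg hzx, if_neg hzy, sub_zero, abs_zero]
    positivity
end

section
/- Let m be a positive integer, let n > 1 be a real number, and let E ⊆ ℝ^m be Ahlfors-regular of dimension n with constant C > 0. Let 1 ≤ q < n and let f ∈ L^q(E, H^n|_E). Then for H^n-almost every x ∈ E, the integral ∫_E |x−z|^{-(n-1)} |f(z)| dH^n(z) is finite; in particular the potential P(f)(x) = ∫_E |x−z|^{-(n-1)} f(z) dH^n(z) is defined H^n-almost everywhere on E. -/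
/-!
Split the kernel `|x - z| ^ (-(n-1))` at `|x - z| = 1`. Summing over dyadic shells with the upper
Ahlfors bound `H^n(E ∩ B(x,t)) ≤ C t^n` shows that the kernel is integrable on the unit ball around
any `x ∈ E`, uniformly in `x` (as `n - 1 < n`), and lies in `L^{q'}` outside it (as `(n-1) q' > n`
exactly when `q < n`), so Hölder bounds the far part for every `x ∈ E`. Near `x` we use
`|f| ≤ 1 + |f|^q`: the constant contributes a bounded term, and by Tonelli and the symmetry of the
kernel the `|f|^q` term is integrable in `x`, hence finite almost everywhere.
-/

open MeasureTheory Metric Set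
open scoped MeasureTheory ENNReal

lemma ENNReal.le_one_add_rpow {q : ℝ} (hq : 1 ≤ q) (y : ℝ≥0∞) : y ≤ 1 + y ^ q := by
  rcases le_total y 1 with hy | hy
  · exact hy.trans le_self_add
  · calc y = y ^ (1 : ℝ) := (ENNReal.rpow_one y).symm
      _ ≤ y ^ q := ENNReal.rpow_le_rpow_of_exponent_le hy hq
      _ ≤ 1 + y ^ q := le_add_self

lemma ENNReal.tsum_ofReal_mul_pow_ne_top (c : ℝ) {ρ : ℝ} (h0 : 0 ≤ ρ) (h1 : ρ < 1) :
    ∑' k : ℕ, ENNReal.ofReal (c * ρ ^ k) ≠ ∞ := by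
  simp_rw [ENNReal.ofReal_mul' (pow_nonneg h0 _), ENNReal.ofReal_pow h0, ENNReal.tsum_mul_left,
    ENNReal.tsum_geometric]
  exact ENNReal.mul_ne_top ENNReal.ofReal_ne_top
    (ENNReal.inv_ne_top.2 (tsub_pos_iff_lt.2 (ENNReal.ofReal_lt_one.2 h1)).ne')

variable {α : Type*} [MetricSpace α] [MeasurableSpace α]

/-- The upper half of Ahlfors regularity of dimension `s` at the point `x`, at all scales. -/
def UpperRegularAt (ν : Measure α) (A s : ℝ) (x : α) : Prop :=
  ∀ t : ℝ, 0 < t → ν (closedBall x t) ≤ ENNReal.ofReal (A * t ^ s)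

/-- Beyond the diameter of `E` the ball `closedBall x t` sees no more of `E`, so the upper
Ahlfors bound up to scale `diam E` holds at all scales. -/
lemma upperRegularAt_restrict [OpensMeasurableSpace α] {μ : Measure α} {E : Set α} {C n : ℝ}
    (hC : 0 ≤ C) (hn : 0 ≤ n) (hE : E.Nontrivial)
    (hup : ∀ x ∈ E, ∀ t : ℝ, 0 < t → ENNReal.ofReal t ≤ ediam E →
      μ (E ∩ closedBall x t) ≤ ENNReal.ofReal (C * t ^ n))
    {x : α} (hx : x ∈ E) : UpperRegularAt (μ.restrict E) C n x := by
  intro t ht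
  rw [Measure.restrict_apply measurableSet_closedBall, inter_comm]
  by_cases htE : ENNReal.ofReal t ≤ ediam E
  · exact hup x hx t ht htE
  have hbdd : Bornology.IsBounded E := isBounded_iff_ediam_ne_top.2 (ne_top_of_lt (not_le.1 htE))
  have hdiam : ENNReal.ofReal (diam E) = ediam E := ENNReal.ofReal_toReal hbdd.ediam_ne_top
  have hd : 0 < diam E := ENNReal.toReal_pos (ediam_pos_iff.2 hE).ne' hbdd.ediam_ne_top
  have hdt : diam E ≤ t := ENNReal.toReal_le_of_le_ofReal ht.le (not_le.1 htE).le
  calc μ (E ∩ closedBall x t) ≤ μ (E ∩ closedBall x (diam E)) :=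
        measure_mono fun z hz => ⟨hz.1, dist_le_diam_of_mem hbdd hz.1 hx⟩
    _ ≤ ENNReal.ofReal (C * diam E ^ n) := hup x hx _ hd hdiam.le
    _ ≤ ENNReal.ofReal (C * t ^ n) := by gcongr

namespace UpperRegularAt

variable {ν : Measure α} {A s a : ℝ} {x : α}

lemma sigmaFinite (hx : UpperRegularAt ν A s x) : SigmaFinite ν :=
  ⟨⟨⟨fun k : ℕ => ball x (k + 1), fun _ => trivial,
    fun k => ((measure_mono ball_subset_closedBall).trans (hx _ (by positivity))).trans_lt
      ENNReal.ofReal_lt_top, iUnion_ball_nat_succ x⟩⟩⟩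

lemma setLIntegral_shell_le (hx : UpperRegularAt ν A s x) (ha : 0 ≤ a) {r : ℝ} (hr : 0 < r) :
    ∫⁻ z in closedBall x r \ ball x (r / 2), ENNReal.ofReal (dist x z ^ (-a)) ∂ν ≤
      ENNReal.ofReal (A * 2 ^ a * r ^ (s - a)) := by
  calc ∫⁻ z in closedBall x r \ ball x (r / 2), ENNReal.ofReal (dist x z ^ (-a)) ∂ν
      ≤ ∫⁻ _ in closedBall x r \ ball x (r / 2), ENNReal.ofReal ((r / 2) ^ (-a)) ∂ν := by
        refine setLIntegral_mono measurable_const fun z hz => ENNReal.ofReal_le_ofReal ?_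
        have hz : r / 2 ≤ dist x z := by simpa [dist_comm] using hz.2
        exact Real.rpow_le_rpow_of_nonpos (by positivity) hz (neg_nonpos.2 ha)
    _ = ENNReal.ofReal ((r / 2) ^ (-a)) * ν (closedBall x r \ ball x (r / 2)) :=
        setLIntegral_const _ _
    _ ≤ ENNReal.ofReal ((r / 2) ^ (-a)) * ENNReal.ofReal (A * r ^ s) := by
        gcongr
        exact (measure_mono sdiff_subset).trans (hx r hr)
    _ = ENNReal.ofReal (A * 2 ^ a * r ^ (s - a)) := by
        rw [← ENNReal.ofReal_mul (by positivity)]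
        congr 1
        rw [Real.div_rpow hr.le zero_le_two, Real.rpow_neg hr.le, Real.rpow_neg zero_le_two,
          Real.rpow_sub hr]
        field_simp

lemma setLIntegral_le_tsum_shell (hx : UpperRegularAt ν A s x) (ha : 0 ≤ a) {T : Set α}
    {r : ℕ → ℝ} (hr : ∀ k, 0 < r k) (hT : T ⊆ ⋃ k, closedBall x (r k) \ ball x (r k / 2)) :
    ∫⁻ z in T, ENNReal.ofReal (dist x z ^ (-a)) ∂ν ≤
      ∑' k, ENNReal.ofReal (A * 2 ^ a * r k ^ (s - a)) :=
  (lintegral_mono_set hT).trans <| (lintegral_iUnion_le _ _).trans <|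
    ENNReal.tsum_le_tsum fun k => hx.setLIntegral_shell_le ha (hr k)

lemma setLIntegral_closedBall_le [OpensMeasurableSpace α] (hx : UpperRegularAt ν A s x)
    (ha : 0 < a) :
    ∫⁻ z in closedBall x 1, ENNReal.ofReal (dist x z ^ (-a)) ∂ν ≤
      ∑' k : ℕ, ENNReal.ofReal (A * 2 ^ a * ((1 / 2) ^ (s - a)) ^ k) := by
  have hcover : closedBall x 1 ⊆
      {x} ∪ ⋃ k : ℕ, closedBall x ((1 / 2) ^ k) \ ball x ((1 / 2) ^ k / 2) := by
    intro z hz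
    rcases eq_or_ne z x with rfl | hzx
    · exact Or.inl rfl
    obtain ⟨k, hk, hk'⟩ := exists_nat_pow_near_of_lt_one (dist_pos.2 hzx) (mem_closedBall.1 hz)
      (by norm_num : (0 : ℝ) < 1 / 2) (by norm_num)
    refine Or.inr (mem_iUnion.2 ⟨k, mem_closedBall.2 hk', fun hball => ?_⟩)
    rw [mem_ball, ← mul_one_div, ← pow_succ] at hball
    exact (lt_asymm hk hball).elim
  have hcenter : ∫⁻ z in {x}, ENNReal.ofReal (dist x z ^ (-a)) ∂ν = 0 := by
    simp [Real.zero_rpow (neg_ne_zero.2 ha.ne')]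
  calc ∫⁻ z in closedBall x 1, ENNReal.ofReal (dist x z ^ (-a)) ∂ν
      ≤ ∫⁻ z in {x}, ENNReal.ofReal (dist x z ^ (-a)) ∂ν +
          ∫⁻ z in ⋃ k : ℕ, closedBall x ((1 / 2) ^ k) \ ball x ((1 / 2) ^ k / 2),
            ENNReal.ofReal (dist x z ^ (-a)) ∂ν :=
        (lintegral_mono_set hcover).trans (lintegral_union_le _ _ _)
    _ ≤ ∑' k : ℕ, ENNReal.ofReal (A * 2 ^ a * ((1 / 2) ^ (s - a)) ^ k) := by
        rw [hcenter, zero_add]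
        simp_rw [Real.rpow_pow_comm (by norm_num : (0 : ℝ) ≤ 1 / 2)]
        exact hx.setLIntegral_le_tsum_shell ha.le (fun k => by positivity) subset_rfl

lemma setLIntegral_compl_closedBall_lt_top (hx : UpperRegularAt ν A s x) (ha : 0 ≤ a)
    (hsa : s < a) :
    ∫⁻ z in (closedBall x 1)ᶜ, ENNReal.ofReal (dist x z ^ (-a)) ∂ν < ∞ := by
  have hcover : (closedBall x 1)ᶜ ⊆ ⋃ k : ℕ, closedBall x (2 ^ k) \ ball x (2 ^ k / 2) := by
    intro z hz
    have hz1 : 1 < dist z x := by simpa using hz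
    obtain ⟨k, hk, hk'⟩ := exists_nat_pow_near hz1.le one_lt_two
    refine mem_iUnion.2 ⟨k + 1, mem_closedBall.2 hk'.le, fun hball => ?_⟩
    rw [mem_ball, pow_succ, mul_div_cancel_right₀ _ two_ne_zero] at hball
    exact (not_lt.2 hk hball).elim
  refine (hx.setLIntegral_le_tsum_shell ha (fun k => by positivity) hcover).trans_lt ?_
  simp_rw [← Real.rpow_pow_comm zero_le_two]
  exact (ENNReal.tsum_ofReal_mul_pow_ne_top _ (by positivity)
    (Real.rpow_lt_one_of_one_lt_of_neg one_lt_two (by linarith))).lt_top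

/-- Hölder's inequality with the conjugate exponent `p` of `q` reduces this to the integrability
of `dist x · ^ (-a p)` away from `x`, which holds as `s < a p`. -/
lemma setLIntegral_compl_closedBall_mul_lt_top [OpensMeasurableSpace α]
    (hx : UpperRegularAt ν A s x) (ha : 0 ≤ a) {q : ℝ} (hq : 1 ≤ q) (hsq : s * (q - 1) < a * q)
    {F : α → ℝ≥0∞} (hF : AEMeasurable F ν) (hFq : ∫⁻ z, F z ^ q ∂ν ≠ ∞) :
    ∫⁻ z in (closedBall x 1)ᶜ, ENNReal.ofReal (dist x z ^ (-a)) * F z ∂ν < ∞ := by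
  rcases hq.eq_or_lt with rfl | hq
  · calc ∫⁻ z in (closedBall x 1)ᶜ, ENNReal.ofReal (dist x z ^ (-a)) * F z ∂ν
        ≤ ∫⁻ z in (closedBall x 1)ᶜ, F z ∂ν := by
          refine setLIntegral_mono' measurableSet_closedBall.compl fun z hz => ?_
          have hz : 1 < dist z x := by simpa using hz
          rw [dist_comm] at hz
          exact mul_le_of_le_one_left' (ENNReal.ofReal_le_one.2
            (Real.rpow_le_one_of_one_le_of_nonpos hz.le (neg_nonpos.2 ha)))
      _ ≤ ∫⁻ z, F z ∂ν := setLIntegral_le_lintegral _ _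
      _ < ∞ := by simpa using hFq.lt_top
  set p := q.conjExponent
  have hpq : p.HolderConjugate q := (Real.HolderConjugate.conjExponent hq).symm
  have hsp : s < a * p := by
    rw [show p = q / (q - 1) from rfl, ← mul_div_assoc, lt_div_iff₀ (by linarith)]
    exact hsq
  have hg : ∫⁻ z in (closedBall x 1)ᶜ, ENNReal.ofReal (dist x z ^ (-a)) ^ p ∂ν < ∞ := by
    simp_rw [ENNReal.ofReal_rpow_of_nonneg (Real.rpow_nonneg dist_nonneg _) hpq.nonneg,
      ← Real.rpow_mul dist_nonneg, neg_mul]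
    exact hx.setLIntegral_compl_closedBall_lt_top (mul_nonneg ha hpq.nonneg) hsp
  have hFq' : ∫⁻ z in (closedBall x 1)ᶜ, F z ^ q ∂ν < ∞ :=
    (setLIntegral_le_lintegral _ _).trans_lt hFq.lt_top
  calc ∫⁻ z in (closedBall x 1)ᶜ, ENNReal.ofReal (dist x z ^ (-a)) * F z ∂ν
      ≤ (∫⁻ z in (closedBall x 1)ᶜ, ENNReal.ofReal (dist x z ^ (-a)) ^ p ∂ν) ^ (1 / p) *
          (∫⁻ z in (closedBall x 1)ᶜ, F z ^ q ∂ν) ^ (1 / q) :=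
        ENNReal.lintegral_mul_le_Lp_mul_Lq _ hpq (
          ((continuous_const.dist continuous_id).measurable.pow_const _).ennreal_ofReal
            |>.aemeasurable) hF.restrict
    _ < ∞ := ENNReal.mul_lt_top
        (ENNReal.rpow_lt_top_of_nonneg (one_div_nonneg.2 hpq.nonneg) hg.ne)
        (ENNReal.rpow_lt_top_of_nonneg (one_div_nonneg.2 (by linarith)) hFq'.ne)

end UpperRegularAt

/-- A Schur test: by Tonelli and the symmetry of the kernel, the left-hand side has integral in
`x` at most `K ∫ G`. -/
lemma ae_setLIntegral_closedBall_mul_lt_top [SecondCountableTopology α] [OpensMeasurableSpace α]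
    {ν : Measure α} [SFinite ν] {φ : ℝ → ℝ≥0∞} (hφ : Measurable φ) {r : ℝ} {K : ℝ≥0∞}
    (hK : K ≠ ∞) (hφK : ∀ᵐ z ∂ν, ∫⁻ x in closedBall z r, φ (dist z x) ∂ν ≤ K)
    {G : α → ℝ≥0∞} (hG : AEMeasurable G ν) (hGint : ∫⁻ z, G z ∂ν ≠ ∞) :
    ∀ᵐ x ∂ν, ∫⁻ z in closedBall x r, φ (dist x z) * G z ∂ν < ∞ := by
  set κ : α → α → ℝ≥0∞ := fun x z =>
    {p : α × α | dist p.1 p.2 ≤ r}.indicator (fun p => φ (dist p.1 p.2)) (x, z)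
  have hκ : Measurable (Function.uncurry κ) :=
    (hφ.comp measurable_dist).indicator (measurableSet_le measurable_dist measurable_const)
  have hκG : AEMeasurable (Function.uncurry fun x z => κ x z * G z) (ν.prod ν) :=
    hκ.aemeasurable.mul hG.comp_snd
  have hκ_left : ∀ x, ∫⁻ z in closedBall x r, φ (dist x z) * G z ∂ν = ∫⁻ z, κ x z * G z ∂ν := by
    intro x
    rw [← lintegral_indicator measurableSet_closedBall]
    congr with z
    by_cases h : dist x z ≤ r <;> simp [κ, indicator, h, dist_comm z x]
  have hκ_right : ∀ z, ∫⁻ x in closedBall z r, φ (dist z x) ∂ν = ∫⁻ x, κ x z ∂ν := by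
    intro z
    rw [← lintegral_indicator measurableSet_closedBall]
    congr with x
    by_cases h : dist x z ≤ r <;> simp [κ, indicator, h, dist_comm z x]
  have hint : ∫⁻ x, ∫⁻ z, κ x z * G z ∂ν ∂ν < ∞ := by
    rw [lintegral_lintegral_swap hκG]
    calc ∫⁻ z, ∫⁻ x, κ x z * G z ∂ν ∂ν = ∫⁻ z, (∫⁻ x, κ x z ∂ν) * G z ∂ν :=
          lintegral_congr fun z =>
            lintegral_mul_const'' _ (hκ.comp measurable_prodMk_right).aemeasurable
      _ ≤ ∫⁻ z, K * G z ∂ν := lintegral_mono_ae <| hφK.mono fun z hz => by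
          rw [← hκ_right]; gcongr
      _ = K * ∫⁻ z, G z ∂ν := lintegral_const_mul' K _ hK
      _ < ∞ := ENNReal.mul_lt_top hK.lt_top hGint.lt_top
  filter_upwards [ae_lt_top' hκG.lintegral_prod_right' hint.ne] with x hx
  rwa [hκ_left]

theorem ae_lintegral_rpow_neg_dist_mul_lt_top [SecondCountableTopology α]
    [OpensMeasurableSpace α] {ν : Measure α} [SFinite ν] {S : Set α} {A s a q : ℝ}
    (hS : ∀ᵐ x ∂ν, x ∈ S) (hreg : ∀ x ∈ S, UpperRegularAt ν A s x) (ha : 0 < a) (has : a < s)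
    (hq : 1 ≤ q) (hsq : s * (q - 1) < a * q) {F : α → ℝ≥0∞} (hF : AEMeasurable F ν)
    (hFq : ∫⁻ z, F z ^ q ∂ν ≠ ∞) :
    ∀ᵐ x ∂ν, ∫⁻ z, ENNReal.ofReal (dist x z ^ (-a)) * F z ∂ν < ∞ := by
  set K := ∑' k : ℕ, ENNReal.ofReal (A * 2 ^ a * ((1 / 2) ^ (s - a)) ^ k)
  have hK : K ≠ ∞ := ENNReal.tsum_ofReal_mul_pow_ne_top _ (by positivity)
    (Real.rpow_lt_one (by norm_num) (by norm_num) (by linarith))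
  have hnear : ∀ x ∈ S, ∫⁻ z in closedBall x 1, ENNReal.ofReal (dist x z ^ (-a)) ∂ν ≤ K :=
    fun x hx => (hreg x hx).setLIntegral_closedBall_le ha
  -- Near `x`, `F ≤ 1 + F ^ q` splits the integral into a bounded part and an `L¹` Schur term.
  have hnearF : ∀ᵐ x ∂ν,
      ∫⁻ z in closedBall x 1, ENNReal.ofReal (dist x z ^ (-a)) * F z ^ q ∂ν < ∞ :=
    ae_setLIntegral_closedBall_mul_lt_top (φ := fun d => ENNReal.ofReal (d ^ (-a))) (by fun_prop)
      hK (hS.mono hnear) (hF.pow_const q) hFq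
  filter_upwards [hS, hnearF] with x hx hxF
  rw [← lintegral_add_compl _ (measurableSet_closedBall (x := x) (ε := 1))]
  refine ENNReal.add_lt_top.2
    ⟨?_, (hreg x hx).setLIntegral_compl_closedBall_mul_lt_top ha.le hq hsq hF hFq⟩
  calc ∫⁻ z in closedBall x 1, ENNReal.ofReal (dist x z ^ (-a)) * F z ∂ν
      ≤ ∫⁻ z in closedBall x 1, ENNReal.ofReal (dist x z ^ (-a)) * (1 + F z ^ q) ∂ν := by
        gcongr with z
        exact ENNReal.le_one_add_rpow hq _
    _ = ∫⁻ z in closedBall x 1, ENNReal.ofReal (dist x z ^ (-a)) ∂ν +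
          ∫⁻ z in closedBall x 1, ENNReal.ofReal (dist x z ^ (-a)) * F z ^ q ∂ν := by
        simp_rw [mul_add, mul_one]
        exact lintegral_add_left (by fun_prop) _
    _ < ∞ := ENNReal.add_lt_top.2 ⟨(hnear x hx).trans_lt hK.lt_top, hxF⟩

theorem stmt_18_general (m : ℕ) (n : ℝ) (hn : 1 < n) (C : ℝ) (hC : 0 < C)
    (E : Set (EuclideanSpace ℝ (Fin m)))
    (hE_closed : IsClosed E) (hE_nontriv : E.Nontrivial)
    (hE_reg : ∀ x ∈ E, ∀ t : ℝ, 0 < t → ENNReal.ofReal t ≤ EMetric.diam E →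
      ENNReal.ofReal (C⁻¹ * t ^ n) ≤ μH[n] (E ∩ Metric.closedBall x t) ∧
        μH[n] (E ∩ Metric.closedBall x t) ≤ ENNReal.ofReal (C * t ^ n))
    (q : ℝ) (hq1 : 1 ≤ q) (hqn : q < n)
    (f : EuclideanSpace ℝ (Fin m) → ℝ)
    (hf : MemLp f (ENNReal.ofReal q) (μH[n].restrict E)) :
    ∀ᵐ x ∂(μH[n].restrict E),
      ∫⁻ z, ENNReal.ofReal (dist x z ^ (-(n - 1))) * (‖f z‖₊ : ENNReal)
          ∂(μH[n].restrict E) < ⊤ := by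
  have hreg : ∀ x ∈ E, UpperRegularAt (μH[n].restrict E) C n x := fun x hx =>
    upperRegularAt_restrict hC.le (by linarith) hE_nontriv
      (fun y hy t ht htE => (hE_reg y hy t ht htE).2) hx
  obtain ⟨x₀, hx₀⟩ := hE_nontriv.nonempty
  have := (hreg x₀ hx₀).sigmaFinite
  have hq0 : 0 < q := by linarith
  have hfq : ∫⁻ z, ‖f z‖ₑ ^ q ∂(μH[n].restrict E) ≠ ∞ := by
    simpa [ENNReal.toReal_ofReal hq0.le] using (lintegral_rpow_enorm_lt_top_of_eLpNorm_lt_top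
      (by simpa using hq0) ENNReal.ofReal_ne_top hf.2).ne
  exact ae_lintegral_rpow_neg_dist_mul_lt_top (ae_restrict_mem hE_closed.measurableSet) hreg
    (by linarith) (by linarith) hq1 (by linarith) hf.1.enorm hfq

/-- If E ⊆ ℝ^m is Ahlfors-regular of dimension n > 1 (real) with constant C,
1 ≤ q < n, and f ∈ L^q(E, H^n|_E), then for H^n-a.e. x ∈ E the integral
∫_E |x−z|^{-(n-1)} |f(z)| dH^n(z) is finite; in particular the potential
P(f)(x) = ∫_E |x−z|^{-(n-1)} f(z) dH^n(z) is defined H^n-a.e. on E. -/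
theorem stmt_18 (m : ℕ) (hm : 0 < m) (n : ℝ) (hn : 1 < n) (C : ℝ) (hC : 0 < C)
    (E : Set (EuclideanSpace ℝ (Fin m)))
    (hE_closed : IsClosed E) (hE_nontriv : E.Nontrivial)
    (hE_reg : ∀ x ∈ E, ∀ t : ℝ, 0 < t → ENNReal.ofReal t ≤ EMetric.diam E →
      ENNReal.ofReal (C⁻¹ * t ^ n) ≤ μH[n] (E ∩ Metric.closedBall x t) ∧
        μH[n] (E ∩ Metric.closedBall x t) ≤ ENNReal.ofReal (C * t ^ n))
    (q : ℝ) (hq1 : 1 ≤ q) (hqn : q < n)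
    (f : EuclideanSpace ℝ (Fin m) → ℝ)
    (hf : MemLp f (ENNReal.ofReal q) (μH[n].restrict E)) :
    ∀ᵐ x ∂(μH[n].restrict E),
      ∫⁻ z, ENNReal.ofReal (dist x z ^ (-(n - 1))) * (‖f z‖₊ : ENNReal)
          ∂(μH[n].restrict E) < ⊤ :=
  stmt_18_general m n hn C hC E hE_closed hE_nontriv hE_reg q hq1 hqn f hf
end

section
/- Let m be a positive integer, let n > 1 be a real number, and let E ⊆ ℝ^m be Ahlfors-regular of dimension n with constant C > 0. Let 1 ≤ q < n and let f ∈ L^q(E, H^n|_E). Then for every x ∈ E and every r > 0, the integral ∫_{{z ∈ E : |z−x| ≥ r}} |x−z|^{-(n-1)} |f(z)| dH^n(z) is finite. -/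
open MeasureTheory Metric
open scoped MeasureTheory

open scoped ENNReal

/-! By Hölder's inequality with the conjugate exponent `p` of `q`, it suffices that
`z ↦ |x - z| ^ (-(n - 1))` lies in `L^p` on `{z | r ≤ |z - x|}`. For `q = 1` it is bounded
there. For `q > 1` one has `(n - 1) p > n` precisely because `q < n`, and on the dyadic annuli
`2^k r ≤ |z - x| ≤ 2^(k+1) r` the upper Ahlfors bound `μ (closedBall x t) ≤ C t ^ n` (which
extends from `t ≤ diam E` to all `t`) dominates the integral of `|x - z| ^ (-s)` by a geometric
series of ratio `2 ^ (n - s) < 1`. -/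

section PolynomialGrowth

variable {α : Type*} [PseudoMetricSpace α] [MeasurableSpace α]
  {μ : Measure α} {x : α} {C n s r : ℝ}

lemma rpow_neg_mul_rpow_two_pow_succ (k : ℕ) (hr : 0 < r) :
    (2 ^ k * r) ^ (-s) * (C * (2 ^ (k + 1) * r) ^ n) =
      C * 2 ^ n * r ^ (n - s) * (2 ^ (n - s)) ^ k := by
  have h2 : (0 : ℝ) < 2 := two_pos
  rw [Real.mul_rpow (by positivity) hr.le, Real.mul_rpow (by positivity) hr.le,
    ← Real.rpow_natCast (2 : ℝ) k, ← Real.rpow_natCast (2 : ℝ) (k + 1),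
    ← Real.rpow_natCast ((2 : ℝ) ^ (n - s)) k, ← Real.rpow_mul h2.le, ← Real.rpow_mul h2.le,
    ← Real.rpow_mul h2.le, sub_eq_add_neg n s, Real.rpow_add hr]
  push_cast
  rw [show ((k : ℝ) + 1) * n = k * n + n by ring,
    show (n + -s) * (k : ℝ) = k * -s + k * n by ring, Real.rpow_add h2, Real.rpow_add h2]
  ring

lemma setLIntegral_annulus_dist_rpow_neg_le
    (hμ : ∀ t : ℝ, 0 < t → μ (closedBall x t) ≤ ENNReal.ofReal (C * t ^ n))
    (hs : 0 ≤ s) (hr : 0 < r) (k : ℕ) :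
    ∫⁻ z in {z | 2 ^ k * r ≤ dist z x} ∩ closedBall x (2 ^ (k + 1) * r),
        ENNReal.ofReal (dist x z ^ (-s)) ∂μ ≤
      ENNReal.ofReal (C * 2 ^ n * r ^ (n - s)) * ENNReal.ofReal (2 ^ (n - s)) ^ k := by
  have hrk : (0 : ℝ) < 2 ^ k * r := by positivity
  calc ∫⁻ z in {z | 2 ^ k * r ≤ dist z x} ∩ closedBall x (2 ^ (k + 1) * r),
        ENNReal.ofReal (dist x z ^ (-s)) ∂μ
      ≤ ∫⁻ _ in {z | 2 ^ k * r ≤ dist z x} ∩ closedBall x (2 ^ (k + 1) * r),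
        ENNReal.ofReal ((2 ^ k * r) ^ (-s)) ∂μ := by
        refine setLIntegral_mono measurable_const fun z hz => ENNReal.ofReal_le_ofReal ?_
        rw [dist_comm]
        exact Real.rpow_le_rpow_of_nonpos hrk hz.1 (neg_nonpos.2 hs)
    _ ≤ ENNReal.ofReal ((2 ^ k * r) ^ (-s)) * ENNReal.ofReal (C * (2 ^ (k + 1) * r) ^ n) := by
        rw [setLIntegral_const]
        exact mul_le_mul_right ((measure_mono Set.inter_subset_right).trans
          (hμ _ (by positivity))) _
    _ = ENNReal.ofReal (C * 2 ^ n * r ^ (n - s)) * ENNReal.ofReal (2 ^ (n - s)) ^ k := by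
        rw [← ENNReal.ofReal_mul (by positivity), rpow_neg_mul_rpow_two_pow_succ k hr,
          ENNReal.ofReal_mul' (by positivity), ENNReal.ofReal_pow (by positivity)]

lemma setLIntegral_dist_rpow_neg_lt_top
    (hμ : ∀ t : ℝ, 0 < t → μ (closedBall x t) ≤ ENNReal.ofReal (C * t ^ n))
    (hn : 0 ≤ n) (hns : n < s) (hr : 0 < r) :
    ∫⁻ z in {z | r ≤ dist z x}, ENNReal.ofReal (dist x z ^ (-s)) ∂μ < ⊤ := by
  set A : ℕ → Set α := fun k => {z | 2 ^ k * r ≤ dist z x} ∩ closedBall x (2 ^ (k + 1) * r)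
  have hcover : {z | r ≤ dist z x} ⊆ ⋃ k, A k := by
    intro z hz
    obtain ⟨k, hk, hk'⟩ := exists_nat_pow_near ((one_le_div hr).2 hz) one_lt_two
    exact Set.mem_iUnion.2
      ⟨k, (le_div_iff₀ hr).1 hk, mem_closedBall.2 ((div_lt_iff₀ hr).1 hk').le⟩
  have hratio : ENNReal.ofReal (2 ^ (n - s)) < 1 :=
    ENNReal.ofReal_lt_one.2 (Real.rpow_lt_one_of_one_lt_of_neg one_lt_two (by linarith))
  calc ∫⁻ z in {z | r ≤ dist z x}, ENNReal.ofReal (dist x z ^ (-s)) ∂μ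
      ≤ ∑' k, ∫⁻ z in A k, ENNReal.ofReal (dist x z ^ (-s)) ∂μ :=
        (lintegral_mono_set hcover).trans (lintegral_iUnion_le _ _)
    _ ≤ ∑' k, ENNReal.ofReal (C * 2 ^ n * r ^ (n - s)) * ENNReal.ofReal (2 ^ (n - s)) ^ k :=
        ENNReal.tsum_le_tsum (setLIntegral_annulus_dist_rpow_neg_le hμ (by linarith) hr)
    _ < ⊤ := by
        rw [ENNReal.tsum_mul_left, ENNReal.tsum_geometric]
        exact ENNReal.mul_lt_top ENNReal.ofReal_lt_top
          (ENNReal.inv_lt_top.2 (tsub_pos_of_lt hratio))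

lemma memLp_dist_rpow_neg_restrict [OpensMeasurableSpace α] {p : ℝ≥0∞}
    (hμ : ∀ t : ℝ, 0 < t → μ (closedBall x t) ≤ ENNReal.ofReal (C * t ^ n))
    (hn : 0 ≤ n) (hs : 0 ≤ s) (hr : 0 < r) (hp : p ≠ ∞ → n < s * p.toReal) :
    MemLp (fun z => dist x z ^ (-s)) p (μ.restrict {z | r ≤ dist z x}) := by
  have hmeas : AEStronglyMeasurable (fun z => dist x z ^ (-s)) (μ.restrict {z | r ≤ dist z x}) :=
    (by fun_prop : Measurable fun z => dist x z ^ (-s)).aestronglyMeasurable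
  obtain rfl | hp_top := eq_or_ne p ∞
  · refine memLp_top_of_bound hmeas (r ^ (-s))
      ((ae_restrict_iff' ?_).2 (ae_of_all _ fun z hz => ?_))
    · exact measurableSet_le measurable_const (by fun_prop)
    rw [Real.norm_of_nonneg (by positivity), dist_comm]
    exact Real.rpow_le_rpow_of_nonpos hr hz (neg_nonpos.2 hs)
  have hsp := hp hp_top
  have hp0 : p ≠ 0 := by
    rintro rfl
    simp only [ENNReal.toReal_zero, mul_zero] at hsp
    linarith
  refine ⟨hmeas, (eLpNorm_lt_top_iff_lintegral_rpow_enorm_lt_top hp0 hp_top).2 ?_⟩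
  have hpow : ∀ z, ‖dist x z ^ (-s)‖ₑ ^ p.toReal =
      ENNReal.ofReal (dist x z ^ (-(s * p.toReal))) := by
    intro z
    rw [Real.enorm_of_nonneg (by positivity), ENNReal.ofReal_rpow_of_nonneg (by positivity)
      ENNReal.toReal_nonneg, ← Real.rpow_mul dist_nonneg, neg_mul]
  simp only [hpow]
  exact setLIntegral_dist_rpow_neg_lt_top hμ hn hsp hr

end PolynomialGrowth

lemma measure_inter_closedBall_le_of_le_ediam {α : Type*} [MetricSpace α]
    [MeasurableSpace α] {μ : Measure α} {E : Set α} {x : α} {C n : ℝ}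
    (hE : E.Nontrivial) (hx : x ∈ E) (hC : 0 ≤ C) (hn : 0 ≤ n)
    (h : ∀ t : ℝ, 0 < t → ENNReal.ofReal t ≤ ediam E →
      μ (E ∩ closedBall x t) ≤ ENNReal.ofReal (C * t ^ n))
    (t : ℝ) (ht : 0 < t) :
    μ (E ∩ closedBall x t) ≤ ENNReal.ofReal (C * t ^ n) := by
  by_cases htd : ENNReal.ofReal t ≤ ediam E
  · exact h t ht htd
  have hbdd : Bornology.IsBounded E :=
    isBounded_iff_ediam_ne_top.2 (lt_top_of_lt (not_le.1 htd)).ne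
  have hd : 0 < diam E := diam_pos hE hbdd
  have hdt : diam E ≤ t := by
    rw [Metric.diam, ← ENNReal.ofReal_le_ofReal_iff ht.le,
      ENNReal.ofReal_toReal hbdd.ediam_ne_top]
    exact (not_le.1 htd).le
  calc μ (E ∩ closedBall x t) ≤ μ (E ∩ closedBall x (diam E)) :=
        measure_mono fun z hz => ⟨hz.1, mem_closedBall.2 (dist_le_diam_of_mem hbdd hz.1 hx)⟩
    _ ≤ ENNReal.ofReal (C * diam E ^ n) :=
        h _ hd (by rw [Metric.diam, ENNReal.ofReal_toReal hbdd.ediam_ne_top])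
    _ ≤ ENNReal.ofReal (C * t ^ n) := by gcongr

lemma Real.HolderConjugate.lt_sub_one_mul {q p n : ℝ} (h : q.HolderConjugate p) (hqn : q < n) :
    n < (n - 1) * p := by
  have h1 := h.sub_one_mul_conj
  have h2 := h.sub_one_pos
  nlinarith

theorem stmt_19_general (m : ℕ) (n : ℝ) (hn : 1 < n) (C : ℝ) (hC : 0 < C)
    (E : Set (EuclideanSpace ℝ (Fin m)))
    (hE_nontriv : E.Nontrivial)
    (hE_reg : ∀ x ∈ E, ∀ t : ℝ, 0 < t → ENNReal.ofReal t ≤ EMetric.diam E →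
      ENNReal.ofReal (C⁻¹ * t ^ n) ≤ μH[n] (E ∩ Metric.closedBall x t) ∧
        μH[n] (E ∩ Metric.closedBall x t) ≤ ENNReal.ofReal (C * t ^ n))
    (q : ℝ) (hq1 : 1 ≤ q) (hqn : q < n)
    (f : EuclideanSpace ℝ (Fin m) → ℝ)
    (hf : MemLp f (ENNReal.ofReal q) (μH[n].restrict E)) :
    ∀ x ∈ E, ∀ r : ℝ, 0 < r →
      ∫⁻ z in {z : EuclideanSpace ℝ (Fin m) | r ≤ dist z x},
        ENNReal.ofReal (dist x z ^ (-(n - 1))) * (‖f z‖₊ : ENNReal)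
          ∂(μH[n].restrict E) < ⊤ := by
  intro x hx r hr
  have hμ : ∀ t : ℝ, 0 < t →
      μH[n].restrict E (closedBall x t) ≤ ENNReal.ofReal (C * t ^ n) := by
    intro t ht
    rw [Measure.restrict_apply measurableSet_closedBall, Set.inter_comm]
    exact measure_inter_closedBall_le_of_le_ediam hE_nontriv hx hC.le (by linarith)
      (fun t ht htd => (hE_reg x hx t ht htd).2) t ht
  set p := (ENNReal.ofReal q).conjExponent
  have : (ENNReal.ofReal q).HolderConjugate p := .conjExponent (by simpa using hq1)
  have hw : MemLp (fun z => dist x z ^ (-(n - 1))) p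
      ((μH[n].restrict E).restrict {z | r ≤ dist z x}) := by
    refine memLp_dist_rpow_neg_restrict hμ (by linarith) (by linarith) hr fun hp => ?_
    have hqp := ENNReal.HolderConjugate.toReal_of_ne_top (p := ENNReal.ofReal q)
      ENNReal.ofReal_ne_top hp
    rw [ENNReal.toReal_ofReal (by linarith)] at hqp
    exact hqp.lt_sub_one_mul hqn
  have hwf := ((hf.restrict {z | r ≤ dist z x}).mul' (r := 1) hw).eLpNorm_lt_top
  rw [eLpNorm_one_eq_lintegral_enorm] at hwf
  convert hwf using 3 with z
  rw [enorm_mul, Real.enorm_of_nonneg (by positivity), enorm_eq_nnnorm]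

/-- If E ⊆ ℝ^m is Ahlfors-regular of dimension n > 1 (real) with constant C,
1 ≤ q < n, and f ∈ L^q(E, H^n|_E), then for every x ∈ E and every r > 0 the
integral ∫_{z ∈ E : |z−x| ≥ r} |x−z|^{-(n-1)} |f(z)| dH^n(z) is finite. -/
theorem stmt_19 (m : ℕ) (hm : 0 < m) (n : ℝ) (hn : 1 < n) (C : ℝ) (hC : 0 < C)
    (E : Set (EuclideanSpace ℝ (Fin m)))
    (hE_closed : IsClosed E) (hE_nontriv : E.Nontrivial)
    (hE_reg : ∀ x ∈ E, ∀ t : ℝ, 0 < t → ENNReal.ofReal t ≤ EMetric.diam E →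
      ENNReal.ofReal (C⁻¹ * t ^ n) ≤ μH[n] (E ∩ Metric.closedBall x t) ∧
        μH[n] (E ∩ Metric.closedBall x t) ≤ ENNReal.ofReal (C * t ^ n))
    (q : ℝ) (hq1 : 1 ≤ q) (hqn : q < n)
    (f : EuclideanSpace ℝ (Fin m) → ℝ)
    (hf : MemLp f (ENNReal.ofReal q) (μH[n].restrict E)) :
    ∀ x ∈ E, ∀ r : ℝ, 0 < r →
      ∫⁻ z in {z : EuclideanSpace ℝ (Fin m) | r ≤ dist z x},
        ENNReal.ofReal (dist x z ^ (-(n - 1))) * (‖f z‖₊ : ENNReal)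
          ∂(μH[n].restrict E) < ⊤ :=
  stmt_19_general m n hn C hC E hE_nontriv hE_reg q hq1 hqn f hf
end
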